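/- arXiv:1112.5847 — 3 statements merged into one kernel-verified Lean document; each statement's English description precedes it below -/
import Mathlib

section
/- Fix n ≥ 2, t ∈ ℕ and j ∈ {1,…,n}. Conditioned on the event {j ∈ A^t}, the process Π_m(j), m = 0,…,t, is a time-homogeneous Markov chain: for every 0 ≤ m < t, every i ∈ {1,…,n}, every k ∈ ℤ, and every sequence of past values i_0,…,i_{m−1} for which the conditioning event has positive probability, ℙ_id^n( Π_{m+1}(j) = i + k | Π_m(j) = i, Π_{m−1}(j) = i_{m−1}, …, Π_0(j) = i_0, j ∈ A^t ) equals i(n−i)/(n(n−1)) if k = +1, equals (i−1)(n−i+1)/(n(n−1)) if k = −1, equals ((i−1)² + (n−i)²)/(n(n−1)) if k = 0, and equals 0 otherwise. -/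
open Finset Filter MeasureTheory Asymptotics
open scoped Classical Topology

noncomputable section

/-- New position of the card occupying position `p` when the card at position `i` is
removed and reinserted at position `j` (positions are 1-based). -/
def moveCard (i j p : ℕ) : ℕ :=
  if p = i then j
  else if i < p ∧ p ≤ j then p - 1
  else if j ≤ p ∧ p < i then p + 1
  else p

/-- Position of card `k` after `t` random-to-random shuffles started from the initial
position function `σ0`; here `s m = (P (m+1), Q (m+1))` is the pair of the position chosen
for removal and the position chosen for reinsertion at step `m + 1`. -/
def posFrom (σ0 : ℕ → ℕ) (s : ℕ → ℕ × ℕ) : ℕ → ℕ → ℕ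
  | 0, k => σ0 k
  | t + 1, k => moveCard (s t).1 (s t).2 (posFrom σ0 s t k)

/-- Position of card `k` after `t` shuffles started from the identity ordering:
`Π_t(k)` under `ℙ_id^n`. -/
def posOf (s : ℕ → ℕ × ℕ) : ℕ → ℕ → ℕ := posFrom id s

/-- Card `k` is not chosen for removal during the first `t` steps, started from `σ0`. -/
def inAFrom (σ0 : ℕ → ℕ) (s : ℕ → ℕ × ℕ) (t k : ℕ) : Prop :=
  ∀ m < t, (s m).1 ≠ posFrom σ0 s m k

/-- `k ∈ A^t` : card `k` is not chosen for removal during the first `t` steps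
(chain started at the identity). -/
def inA (s : ℕ → ℕ × ℕ) (t k : ℕ) : Prop := inAFrom id s t k

/-- `τ_j^t = t₁` : the last time `m ∈ {1,…,t}` at which card `j` is chosen for removal
(for the chain started at the identity) equals `t₁`. -/
def tauEq (s : ℕ → ℕ × ℕ) (t t₁ j : ℕ) : Prop :=
  (s (t₁ - 1)).1 = posOf s (t₁ - 1) j ∧ ∀ m, t₁ ≤ m → m < t → (s m).1 ≠ posOf s m j

/-- Extension of a finite trajectory of picks in `{1,…,n} × {1,…,n}` to an infinite one. -/
def extSeq {n T : ℕ} (ω : Fin T → Fin n × Fin n) : ℕ → ℕ × ℕ :=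
  fun m => if h : m < T then ((ω ⟨m, h⟩).1.val + 1, (ω ⟨m, h⟩).2.val + 1) else (0, 0)

/-- `ℙ_id^n (E)`, for an event `E` depending on the first `T` steps of the shuffle:
the picks `((P_m, Q_m))_{m=1}^{T}` are i.i.d. uniform on `{1,…,n} × {1,…,n}`. -/
def prS (n T : ℕ) (E : (ℕ → ℕ × ℕ) → Prop) : ℝ :=
  ((Finset.univ.filter (fun ω : Fin T → Fin n × Fin n => E (extSeq ω))).card : ℝ)
    / (n : ℝ) ^ (2 * T)

/-- Elementary conditional probability `ℙ_id^n (E | F)`. -/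
def cprS (n T : ℕ) (E F : (ℕ → ℕ × ℕ) → Prop) : ℝ :=
  prS n T (fun s => E s ∧ F s) / prS n T F

/-- Expectation `E_id^n`. -/
def exS (n T : ℕ) (f : (ℕ → ℕ × ℕ) → ℝ) : ℝ :=
  (∑ ω : Fin T → Fin n × Fin n, f (extSeq ω)) / (n : ℝ) ^ (2 * T)

/-- The 1-based position function of a permutation `σ ∈ S_n` : `permPos σ j = σ(j)`. -/
def permPos {n : ℕ} (σ : Equiv.Perm (Fin n)) (j : ℕ) : ℕ :=
  if h : j - 1 < n then (σ ⟨j - 1, h⟩).val + 1 else j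

/-- Probability of `E` under the uniform measure `U^n` on `S_n`. -/
def prU (n : ℕ) (E : Equiv.Perm (Fin n) → Prop) : ℝ :=
  ((Finset.univ.filter E).card : ℝ) / (Nat.factorial n : ℝ)

/-- Expectation under the uniform measure `U^n` on `S_n`. -/
def exU (n : ℕ) (f : Equiv.Perm (Fin n) → ℝ) : ℝ :=
  (∑ σ : Equiv.Perm (Fin n), f σ) / (Nat.factorial n : ℝ)

/-- Total variation distance `d_n(t) = ‖ℙ_id^n(Π_t ∈ ·) - U^n‖_TV`. -/
def dTV (n t : ℕ) : ℝ :=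
  ⨆ E : Finset (Equiv.Perm (Fin n)),
    |prS n t (fun s => ∃ σ ∈ E, ∀ j ∈ Finset.Icc 1 n, posOf s t j = permPos σ j)
      - (E.card : ℝ) / (Nat.factorial n : ℝ)|

/-- `D^n = {1,…,n} ∩ [n(1-ε)/2, n(1+ε)/2]`. -/
def Dset (n : ℕ) (ε : ℝ) : Finset ℕ :=
  (Finset.Icc 1 n).filter
    (fun j => (n : ℝ) * (1 - ε) / 2 ≤ (j : ℝ) ∧ (j : ℝ) ≤ (n : ℝ) * (1 + ε) / 2)

/-- `Δ_α(σ) = {j ∈ D^n : |σ(j) - j| ≤ α √(n log n)}`, for a position function `σ`. -/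
def deltaSet (n : ℕ) (ε α : ℝ) (σ : ℕ → ℕ) : Finset ℕ :=
  (Dset n ε).filter (fun j => |(σ j : ℝ) - (j : ℝ)| ≤ α * Real.sqrt ((n : ℝ) * Real.log n))

/-- Tail probability function `Ψ` of the standard normal distribution. -/
def gaussTail (x : ℝ) : ℝ := (ProbabilityTheory.gaussianReal 0 1 (Set.Ici x)).toReal

/-- CDF of the standard normal distribution. -/
def gaussCDF (x : ℝ) : ℝ := (ProbabilityTheory.gaussianReal 0 1 (Set.Iic x)).toReal

/-- `p ∈ overline{c ± δ} = {1,…,n} ∩ [c - δ, c + δ]`. -/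
def inBall (n c : ℕ) (δ : ℝ) (p : ℕ) : Prop :=
  p ∈ Finset.Icc 1 n ∧ |(p : ℝ) - (c : ℝ)| ≤ δ

/-- The initial ordering used in the definition of `𝒫_{m₁,m₂}^{n,t'}` for cards `i ≠ j`:
card `j` is at position `m₂`, and card `i` is at position `m₁ + 1` if `m₂ ≤ m₁`
and at position `m₁` if `m₂ > m₁`. -/
def initPerm (i j m₁ m₂ : ℕ) : ℕ → ℕ :=
  fun k => if k = j then m₂ else if k = i then (if m₂ ≤ m₁ then m₁ + 1 else m₁) else k

/-- The measure `𝒫_{m₁,m₂}^{n,t'}` (for the pair of distinct cards `i, j`) evaluated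
at the event `E` : the joint law of the positions of cards `i` and `j` after `t'` shuffles,
conditioned on neither `i` nor `j` being chosen for removal. -/
def Pm (n t' i j m₁ m₂ : ℕ) (E : ℕ × ℕ → Prop) : ℝ :=
  cprS n t'
    (fun s => E (posFrom (initPerm i j m₁ m₂) s t' i, posFrom (initPerm i j m₁ m₂) s t' j))
    (fun s => inAFrom (initPerm i j m₁ m₂) s t' i ∧ inAFrom (initPerm i j m₁ m₂) s t' j)

/-- `λ_n` as in Theorem 1.2. -/
def lamOf (γ : ℝ) (j : ℕ → ℕ) (n : ℕ) : ℝ :=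
  if γ = 0 then (j n : ℝ) / (n : ℝ)
  else if γ = 1 then ((n : ℝ) - (j n : ℝ)) / (n : ℝ)
  else γ * (1 - γ)

end


noncomputable section MyAux

/-- counting version of `prS`. -/
def cnt (n T : ℕ) (E : (ℕ → ℕ × ℕ) → Prop) : ℕ :=
  (Finset.univ.filter (fun ω : Fin T → Fin n × Fin n => E (extSeq ω))).card

lemma prS_eq_cnt (n T : ℕ) (E : (ℕ → ℕ × ℕ) → Prop) :
    prS n T E = (cnt n T E : ℝ) / (n : ℝ) ^ (2 * T) := rfl

lemma cnt_congr {n T : ℕ} {E E' : (ℕ → ℕ × ℕ) → Prop}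
    (h : ∀ ω : Fin T → Fin n × Fin n, E (extSeq ω) ↔ E' (extSeq ω)) :
    cnt n T E = cnt n T E' := by
  unfold cnt
  congr 1
  exact Finset.filter_congr (fun ω _ => h ω)

lemma extSeq_snoc_lt {n T : ℕ} (ω : Fin T → Fin n × Fin n) (a : Fin n × Fin n)
    {l : ℕ} (hl : l < T) : extSeq (Fin.snoc ω a) l = extSeq ω l := by
  unfold extSeq
  rw [dif_pos (Nat.lt_succ_of_lt hl), dif_pos hl]
  have h : (⟨l, Nat.lt_succ_of_lt hl⟩ : Fin (T + 1)) = Fin.castSucc ⟨l, hl⟩ := rfl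
  rw [h, Fin.snoc_castSucc]

lemma extSeq_snoc_last {n T : ℕ} (ω : Fin T → Fin n × Fin n) (a : Fin n × Fin n) :
    extSeq (Fin.snoc ω a) T = (a.1.val + 1, a.2.val + 1) := by
  unfold extSeq
  rw [dif_pos (Nat.lt_succ_self T)]
  have h : (⟨T, Nat.lt_succ_self T⟩ : Fin (T + 1)) = Fin.last T := rfl
  rw [h, Fin.snoc_last]

lemma posFrom_congr (σ0 : ℕ → ℕ) {s s' : ℕ → ℕ × ℕ} (k : ℕ) :
    ∀ L : ℕ, (∀ l < L, s l = s' l) → posFrom σ0 s L k = posFrom σ0 s' L k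
  | 0, _ => rfl
  | (L + 1), h => by
    show moveCard (s L).1 (s L).2 (posFrom σ0 s L k)
        = moveCard (s' L).1 (s' L).2 (posFrom σ0 s' L k)
    rw [h L (Nat.lt_succ_self L),
      posFrom_congr σ0 k L (fun l hl => h l (Nat.lt_succ_of_lt hl))]

lemma inAFrom_congr (σ0 : ℕ → ℕ) {s s' : ℕ → ℕ × ℕ} (T k : ℕ)
    (h : ∀ l < T, s l = s' l) : inAFrom σ0 s T k ↔ inAFrom σ0 s' T k := by
  unfold inAFrom
  apply forall_congr'
  intro l
  by_cases hl : l < T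
  · simp only [hl, true_implies, forall_true_left]
    rw [h l hl, posFrom_congr σ0 k l (fun l' hl' => h l' (hl'.trans hl))]
  · simp [hl]

lemma moveCard_bounds {n p q v : ℕ} (hp : 1 ≤ p) (hp' : p ≤ n) (hq : 1 ≤ q) (hq' : q ≤ n)
    (hv : 1 ≤ v) (hv' : v ≤ n) : 1 ≤ moveCard p q v ∧ moveCard p q v ≤ n := by
  unfold moveCard; split_ifs <;> omega

lemma extSeq_bounds {n T : ℕ} (ω : Fin T → Fin n × Fin n) {l : ℕ} (hl : l < T) :
    (1 ≤ (extSeq ω l).1 ∧ (extSeq ω l).1 ≤ n) ∧ (1 ≤ (extSeq ω l).2 ∧ (extSeq ω l).2 ≤ n) := by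
  unfold extSeq
  rw [dif_pos hl]
  have h1 := (ω ⟨l, hl⟩).1.isLt
  have h2 := (ω ⟨l, hl⟩).2.isLt
  constructor <;> constructor <;> simp <;> omega

lemma posOf_bounds {n T : ℕ} (ω : Fin T → Fin n × Fin n) {j : ℕ} (hj1 : 1 ≤ j) (hj2 : j ≤ n) :
    ∀ L, L ≤ T → 1 ≤ posOf (extSeq ω) L j ∧ posOf (extSeq ω) L j ≤ n
  | 0, _ => ⟨hj1, hj2⟩
  | (L + 1), hL => by
    have hl : L < T := hL
    have IH := posOf_bounds ω hj1 hj2 L (Nat.le_of_succ_le hL)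
    have hb := extSeq_bounds ω hl
    show 1 ≤ moveCard (extSeq ω L).1 (extSeq ω L).2 (posOf (extSeq ω) L j) ∧ _
    exact moveCard_bounds hb.1.1 hb.1.2 hb.2.1 hb.2.2 IH.1 IH.2

end MyAux


noncomputable section MyAux2


lemma card_filter_lt' (n c : ℕ) [DecidablePred (fun a : Fin n => a.val < c)] :
    ((Finset.univ : Finset (Fin n)).filter (fun a => a.val < c)).card = min c n := by
  have h : ∀ m ∈ Finset.range (min c n), m < n := by intro m hm; simp at hm; omega
  have e : ((Finset.univ : Finset (Fin n)).filter (fun a => a.val < c))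
      = (Finset.range (min c n)).attachFin h := by
    ext a
    simp [Finset.mem_attachFin]
  rw [e, Finset.card_attachFin, Finset.card_range]

lemma card_filter_ge (n c : ℕ) [DecidablePred (fun a : Fin n => c ≤ a.val)] :
    ((Finset.univ : Finset (Fin n)).filter (fun a => c ≤ a.val)).card = n - c := by
  have h : ∀ m ∈ Finset.range n \ Finset.range c, m < n := by intro m hm; simp at hm; omega
  have e : ((Finset.univ : Finset (Fin n)).filter (fun a => c ≤ a.val))
      = (Finset.range n \ Finset.range c).attachFin h := by
    ext a
    simp [Finset.mem_attachFin]
  by_cases hcn : c ≤ n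
  · rw [e, Finset.card_attachFin,
      Finset.card_sdiff_of_subset (Finset.range_subset_range.mpr hcn), Finset.card_range, Finset.card_range]
  · rw [e, Finset.card_attachFin]
    have h2 : Finset.range n \ Finset.range c = ∅ := by
      apply Finset.sdiff_eq_empty_iff_subset.mpr
      exact Finset.range_subset_range.mpr (by omega)
    rw [h2]
    simp
    omega

lemma card_filter_ne (n c : ℕ) (h1 : 1 ≤ c) (h2 : c ≤ n)
    [DecidablePred (fun a : Fin n => a.val + 1 ≠ c)] :
    ((Finset.univ : Finset (Fin n)).filter (fun a => a.val + 1 ≠ c)).card = n - 1 := by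
  have hc : c - 1 < n := by omega
  have e : ((Finset.univ : Finset (Fin n)).filter (fun a => a.val + 1 ≠ c))
      = Finset.univ.erase ⟨c - 1, hc⟩ := by
    ext a
    simp [Fin.ext_iff]
    omega
  rw [e, Finset.card_erase_of_mem (Finset.mem_univ _), Finset.card_univ, Fintype.card_fin]

lemma card_filter_prod {α γ : Type*} [Fintype α] [Fintype γ] (P : α → Prop) (Q : γ → Prop)
    [DecidablePred P] [DecidablePred Q] [DecidablePred (fun x : α × γ => P x.1 ∧ Q x.2)] :
    ((Finset.univ : Finset (α × γ)).filter (fun x => P x.1 ∧ Q x.2)).card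
      = (Finset.univ.filter P).card * (Finset.univ.filter Q).card := by
  rw [← Finset.card_product]
  congr 1
  ext x
  simp [Finset.mem_product]

noncomputable section

def ckNat (n i : ℕ) (k : ℤ) : ℕ :=
  if k = 1 then (n - i) * i
  else if k = -1 then (i - 1) * (n - (i - 1))
  else if k = 0 then (i - 1) * (i - 1) + (n - i) * (n - i)
  else 0


lemma card_move (n i : ℕ) (h1 : 1 ≤ i) (h2 : i ≤ n) (k : ℤ)
    [DecidablePred (fun a : Fin n × Fin n =>
      a.1.val + 1 ≠ i ∧ ((moveCard (a.1.val + 1) (a.2.val + 1) i : ℕ) : ℤ) = (i : ℤ) + k)] :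
    ((Finset.univ : Finset (Fin n × Fin n)).filter
        (fun a => a.1.val + 1 ≠ i ∧ ((moveCard (a.1.val + 1) (a.2.val + 1) i : ℕ) : ℤ) = (i : ℤ) + k)).card
      = ckNat n i k := by
  by_cases hk1 : k = 1
  · subst hk1
    have he : ∀ a : Fin n × Fin n,
        (a.1.val + 1 ≠ i ∧ ((moveCard (a.1.val + 1) (a.2.val + 1) i : ℕ) : ℤ) = (i : ℤ) + 1)
          ↔ (i ≤ a.1.val ∧ a.2.val < i) := by
      intro a
      unfold moveCard
      split_ifs <;> omega
    rw [Finset.filter_congr (fun a _ => he a),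
      card_filter_prod (fun b : Fin n => i ≤ b.val) (fun b : Fin n => b.val < i),
      card_filter_ge, card_filter_lt']
    simp [ckNat]
    omega
  by_cases hkm : k = -1
  · subst hkm
    have he : ∀ a : Fin n × Fin n,
        (a.1.val + 1 ≠ i ∧ ((moveCard (a.1.val + 1) (a.2.val + 1) i : ℕ) : ℤ) = (i : ℤ) + (-1))
          ↔ (a.1.val < i - 1 ∧ i - 1 ≤ a.2.val) := by
      intro a
      unfold moveCard
      split_ifs <;> omega
    rw [Finset.filter_congr (fun a _ => he a),
      card_filter_prod (fun b : Fin n => b.val < i - 1) (fun b : Fin n => i - 1 ≤ b.val),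
      card_filter_lt', card_filter_ge]
    simp [ckNat]
    omega
  by_cases hk0 : k = 0
  · subst hk0
    have he : ∀ a : Fin n × Fin n,
        (a.1.val + 1 ≠ i ∧ ((moveCard (a.1.val + 1) (a.2.val + 1) i : ℕ) : ℤ) = (i : ℤ) + 0)
          ↔ ((a.1.val < i - 1 ∧ a.2.val < i - 1) ∨ (i ≤ a.1.val ∧ i ≤ a.2.val)) := by
      intro a
      unfold moveCard
      split_ifs <;> omega
    rw [Finset.filter_congr (fun a _ => he a), Finset.filter_or,
      Finset.card_union_of_disjoint,
      card_filter_prod (fun b : Fin n => b.val < i - 1) (fun b : Fin n => b.val < i - 1),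
      card_filter_prod (fun b : Fin n => i ≤ b.val) (fun b : Fin n => i ≤ b.val),
      card_filter_lt', card_filter_ge]
    · have hmin : min (i - 1) n = i - 1 := by omega
      rw [hmin]
      simp [ckNat]
    · rw [Finset.disjoint_left]
      intro a ha hb
      simp at ha hb
      omega
  · have he : ∀ a : Fin n × Fin n,
        ¬ (a.1.val + 1 ≠ i ∧ ((moveCard (a.1.val + 1) (a.2.val + 1) i : ℕ) : ℤ) = (i : ℤ) + k) := by
      intro a
      unfold moveCard
      split_ifs <;> omega
    rw [Finset.filter_false_of_mem (fun a _ => he a)]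
    simp [ckNat, hk1, hkm, hk0]

end

lemma cnt_snoc (n T : ℕ) (H : (ℕ → ℕ × ℕ) → Prop) (g : (ℕ → ℕ × ℕ) → ℕ × ℕ → Prop) (c : ℕ)
    (hH : ∀ (ω : Fin T → Fin n × Fin n) (a : Fin n × Fin n),
      H (extSeq (Fin.snoc ω a)) ↔ H (extSeq ω))
    (hg : ∀ (ω : Fin T → Fin n × Fin n) (a : Fin n × Fin n),
      g (extSeq (Fin.snoc ω a)) (extSeq (Fin.snoc ω a) T) ↔ g (extSeq ω) (a.1.val + 1, a.2.val + 1))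
    (hc : ∀ ω : Fin T → Fin n × Fin n, H (extSeq ω) →
      ∀ inst : DecidablePred (fun a : Fin n × Fin n =>
        g (extSeq ω) (a.1.val + 1, a.2.val + 1)),
      (@Finset.filter _ (fun a : Fin n × Fin n =>
        g (extSeq ω) (a.1.val + 1, a.2.val + 1)) inst Finset.univ).card = c) :
    cnt n (T + 1) (fun s => H s ∧ g s (s T)) = cnt n T H * c := by
  unfold cnt
  rw [Finset.card_eq_sum_card_fiberwise
    (f := fun ω' : Fin (T + 1) → Fin n × Fin n => Fin.init ω')
    (t := Finset.univ) (fun ω' _ => Finset.mem_univ _)]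
  have hfib : ∀ ω : Fin T → Fin n × Fin n,
      ∀ inst : DecidablePred (fun ω' : Fin (T + 1) → Fin n × Fin n => Fin.init ω' = ω),
      ∀ inst2 : DecidablePred (fun ω' : Fin (T + 1) → Fin n × Fin n =>
        (fun s => H s ∧ g s (s T)) (extSeq ω')),
      (@Finset.filter _ (fun ω' => Fin.init ω' = ω) inst
          (@Finset.filter _ (fun ω' : Fin (T + 1) → Fin n × Fin n =>
            (fun s => H s ∧ g s (s T)) (extSeq ω')) inst2 Finset.univ)).card
        = if H (extSeq ω) then c else 0 := by
    intro ω inst inst2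
    by_cases h : H (extSeq ω)
    · rw [if_pos h, ← hc ω h (fun a => Classical.propDecidable _)]
      refine Finset.card_bij' (fun ω' _ => ω' (Fin.last T))
        (fun a _ => Fin.snoc ω a) ?hi ?hj ?li ?ri
      case hi =>
        intro ω' hω'
        simp only [Finset.mem_filter, Finset.mem_univ, true_and] at hω' ⊢
        obtain ⟨⟨hH', hg'⟩, hinit⟩ := hω'
        have hrw : ω' = Fin.snoc ω (ω' (Fin.last T)) := by
          rw [← hinit, Fin.snoc_init_self]
        rw [hrw] at hg'
        exact (hg ω (ω' (Fin.last T))).mp hg'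
      case hj =>
        intro a ha
        simp only [Finset.mem_filter, Finset.mem_univ, true_and] at ha ⊢
        refine ⟨⟨(hH ω a).mpr h, (hg ω a).mpr ha⟩, ?_⟩
        simp
      case li =>
        intro ω' hω'
        simp only [Finset.mem_filter, Finset.mem_univ, true_and] at hω'
        show Fin.snoc ω (ω' (Fin.last T)) = ω'
        rw [← hω'.2, Fin.snoc_init_self]
      case ri =>
        intro a _
        simp
    · rw [if_neg h, Finset.card_eq_zero, Finset.filter_eq_empty_iff]
      intro ω' hω'
      simp only [Finset.mem_filter, Finset.mem_univ, true_and] at hω'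
      intro hinit
      apply h
      have hrw : ω' = Fin.snoc ω (ω' (Fin.last T)) := by
        rw [← hinit, Fin.snoc_init_self]
      rw [hrw] at hω'
      exact (hH ω (ω' (Fin.last T))).mp hω'.1
  refine Eq.trans (Finset.sum_congr rfl (fun b _ => hfib b _ _)) ?_
  rw [Finset.sum_ite, Finset.sum_const, Finset.sum_const_zero, add_zero, smul_eq_mul]

lemma posOf_snoc {n T : ℕ} (ω : Fin T → Fin n × Fin n) (a : Fin n × Fin n) (j : ℕ)
    {L : ℕ} (hL : L ≤ T) :
    posOf (extSeq (Fin.snoc ω a)) L j = posOf (extSeq ω) L j :=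
  posFrom_congr id j L (fun l hl => extSeq_snoc_lt ω a (lt_of_lt_of_le hl hL))

/-- The conditioning event. -/
def FEv (j m i : ℕ) (hist : ℕ → ℕ) (T : ℕ) (s : ℕ → ℕ × ℕ) : Prop :=
  posOf s m j = i ∧ (∀ l < m, posOf s l j = hist l) ∧ inA s T j

lemma FEv_congr {j m i : ℕ} {hist : ℕ → ℕ} {T : ℕ} (hmT : m ≤ T) {s s' : ℕ → ℕ × ℕ}
    (h : ∀ l < T, s l = s' l) : FEv j m i hist T s ↔ FEv j m i hist T s' := by
  unfold FEv
  have hpos : ∀ l ≤ T, posOf s l j = posOf s' l j := by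
    intro l hl
    exact posFrom_congr id j l (fun l' hl' => h l' (lt_of_lt_of_le hl' hl))
  rw [hpos m hmT]
  have h2 : (∀ l < m, posOf s l j = hist l) ↔ (∀ l < m, posOf s' l j = hist l) := by
    apply forall_congr'
    intro l
    by_cases hl : l < m
    · simp only [hl, forall_true_left, true_implies]
      rw [hpos l (le_of_lt (lt_of_lt_of_le hl hmT))]
    · simp [hl]
  rw [h2]
  unfold inA
  rw [inAFrom_congr id T j h]

lemma FEv_succ {j m i : ℕ} {hist : ℕ → ℕ} {T : ℕ} (s : ℕ → ℕ × ℕ) :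
    FEv j m i hist (T + 1) s ↔ FEv j m i hist T s ∧ (s T).1 ≠ posOf s T j := by
  unfold FEv inA inAFrom
  constructor
  · rintro ⟨h1, h2, h3⟩
    exact ⟨⟨h1, h2, fun l hl => h3 l (Nat.lt_succ_of_lt hl)⟩, h3 T (Nat.lt_succ_self T)⟩
  · rintro ⟨⟨h1, h2, h3⟩, h4⟩
    refine ⟨h1, h2, fun l hl => ?_⟩
    rcases Nat.lt_succ_iff_lt_or_eq.mp hl with hl' | hl'
    · exact h3 l hl'
    · subst hl'; exact h4

/-- One cancellation step above time `m`. -/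
lemma cnt_step (n j m i T : ℕ) (hist : ℕ → ℕ) (hj1 : 1 ≤ j) (hj2 : j ≤ n) (hmT : m ≤ T)
    (G : (ℕ → ℕ × ℕ) → Prop)
    (hG : ∀ (ω : Fin T → Fin n × Fin n) (a : Fin n × Fin n),
      G (extSeq (Fin.snoc ω a)) ↔ G (extSeq ω)) :
    cnt n (T + 1) (fun s => G s ∧ FEv j m i hist (T + 1) s)
      = cnt n T (fun s => G s ∧ FEv j m i hist T s) * ((n - 1) * n) := by
  have e1 : cnt n (T + 1) (fun s => G s ∧ FEv j m i hist (T + 1) s)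
      = cnt n (T + 1) (fun s => (G s ∧ FEv j m i hist T s) ∧ (s T).1 ≠ posOf s T j) := by
    apply cnt_congr
    intro ω
    rw [FEv_succ]
    tauto
  rw [e1]
  apply cnt_snoc n T (fun s => G s ∧ FEv j m i hist T s)
    (fun s a => a.1 ≠ posOf s T j) ((n - 1) * n)
  · intro ω a
    have hagree : ∀ l < T, extSeq (Fin.snoc ω a) l = extSeq ω l :=
      fun l hl => extSeq_snoc_lt ω a hl
    exact and_congr (hG ω a) (FEv_congr hmT hagree)
  · intro ω a
    rw [extSeq_snoc_last, posOf_snoc ω a j (le_refl T)]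
  · intro ω _ inst
    have hb := posOf_bounds ω hj1 hj2 T (le_refl T)
    have e2 : (@Finset.filter _ _ inst Finset.univ)
        = Finset.univ.filter (fun a : Fin n × Fin n =>
            a.1.val + 1 ≠ posOf (extSeq ω) T j ∧ True) := by
      apply Finset.filter_congr
      intro a _
      simp
    rw [e2, card_filter_prod (fun b : Fin n => b.val + 1 ≠ posOf (extSeq ω) T j)
        (fun _ : Fin n => True),
      card_filter_ne n _ hb.1 hb.2, Finset.filter_true, Finset.card_univ, Fintype.card_fin]

lemma cnt_chain (n j m i : ℕ) (hist : ℕ → ℕ) (hj1 : 1 ≤ j) (hj2 : j ≤ n)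
    (G : (ℕ → ℕ × ℕ) → Prop)
    (hG : ∀ T', m + 1 ≤ T' → ∀ (ω : Fin T' → Fin n × Fin n) (a : Fin n × Fin n),
      G (extSeq (Fin.snoc ω a)) ↔ G (extSeq ω)) :
    ∀ d, cnt n (m + 1 + d) (fun s => G s ∧ FEv j m i hist (m + 1 + d) s)
      = cnt n (m + 1) (fun s => G s ∧ FEv j m i hist (m + 1) s) * ((n - 1) * n) ^ d := by
  intro d
  induction d with
  | zero => rw [pow_zero, mul_one]
  | succ d ih =>
    show cnt n (m + 1 + d + 1) (fun s => G s ∧ FEv j m i hist (m + 1 + d + 1) s) = _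
    rw [cnt_step n j m i (m + 1 + d) hist hj1 hj2 (by omega) G (hG (m + 1 + d) (by omega)),
      ih, pow_succ, mul_assoc]

lemma cnt_num_base (n j m i : ℕ) (hist : ℕ → ℕ) (k : ℤ) (h1 : 1 ≤ i) (h2 : i ≤ n) :
    cnt n (m + 1) (fun s => ((posOf s (m + 1) j : ℤ) = (i : ℤ) + k) ∧ FEv j m i hist (m + 1) s)
      = cnt n m (FEv j m i hist m) * ckNat n i k := by
  have e1 : cnt n (m + 1)
        (fun s => ((posOf s (m + 1) j : ℤ) = (i : ℤ) + k) ∧ FEv j m i hist (m + 1) s)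
      = cnt n (m + 1) (fun s => FEv j m i hist m s ∧
          ((s m).1 ≠ i ∧ ((moveCard (s m).1 (s m).2 i : ℕ) : ℤ) = (i : ℤ) + k)) := by
    apply cnt_congr
    intro ω
    rw [FEv_succ]
    have hstep : ∀ s : ℕ → ℕ × ℕ, posOf s (m + 1) j
        = moveCard (s m).1 (s m).2 (posOf s m j) := fun _ => rfl
    constructor
    · rintro ⟨hE, hF, hlast⟩
      have hpos := hF.1
      rw [hstep, hpos] at hE
      rw [hpos] at hlast
      exact ⟨hF, hlast, hE⟩
    · rintro ⟨hF, hne, hmove⟩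
      have hpos := hF.1
      refine ⟨?_, hF, ?_⟩
      · rw [hstep, hpos]; exact hmove
      · rw [hpos]; exact hne
  rw [e1]
  apply cnt_snoc n m (FEv j m i hist m)
    (fun _ a => a.1 ≠ i ∧ ((moveCard a.1 a.2 i : ℕ) : ℤ) = (i : ℤ) + k) (ckNat n i k)
  · intro ω a
    exact FEv_congr (le_refl m) (fun l hl => extSeq_snoc_lt ω a hl)
  · intro ω a
    rw [extSeq_snoc_last]
  · intro ω _ inst
    have e2 : (@Finset.filter _ _ inst Finset.univ)
        = Finset.univ.filter (fun a : Fin n × Fin n =>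
            a.1.val + 1 ≠ i ∧ ((moveCard (a.1.val + 1) (a.2.val + 1) i : ℕ) : ℤ) = (i : ℤ) + k) := by
      apply Finset.filter_congr
      intro a _
      simp
    rw [e2, card_move n i h1 h2 k]


end MyAux2

theorem conditioned_chain_transition (n t : ℕ) (hn : 2 ≤ n)
    (j : ℕ) (hj : j ∈ Finset.Icc 1 n) (m : ℕ) (hm : m < t)
    (i : ℕ) (hi : i ∈ Finset.Icc 1 n) (k : ℤ) (hist : ℕ → ℕ)
    (hpos : 0 < prS n t
      (fun s => posOf s m j = i ∧ (∀ l < m, posOf s l j = hist l) ∧ inA s t j)) :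
    cprS n t (fun s => (posOf s (m + 1) j : ℤ) = (i : ℤ) + k)
        (fun s => posOf s m j = i ∧ (∀ l < m, posOf s l j = hist l) ∧ inA s t j)
      = if k = 1 then (i : ℝ) * ((n : ℝ) - (i : ℝ)) / ((n : ℝ) * ((n : ℝ) - 1))
        else if k = -1 then
          ((i : ℝ) - 1) * ((n : ℝ) - (i : ℝ) + 1) / ((n : ℝ) * ((n : ℝ) - 1))
        else if k = 0 then
          (((i : ℝ) - 1) ^ 2 + ((n : ℝ) - (i : ℝ)) ^ 2) / ((n : ℝ) * ((n : ℝ) - 1))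
        else 0 := by
  obtain ⟨hi1, hi2⟩ := Finset.mem_Icc.mp hi
  obtain ⟨hj1, hj2⟩ := Finset.mem_Icc.mp hj
  have hd : t = m + 1 + (t - (m + 1)) := by omega
  set d := t - (m + 1) with hdd
  -- counting identities
  have hGE : ∀ T', m + 1 ≤ T' → ∀ (ω : Fin T' → Fin n × Fin n) (a : Fin n × Fin n),
      ((posOf (extSeq (Fin.snoc ω a)) (m + 1) j : ℤ) = (i : ℤ) + k)
        ↔ ((posOf (extSeq ω) (m + 1) j : ℤ) = (i : ℤ) + k) := by
    intro T' hT' ω a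
    rw [posOf_snoc ω a j hT']
  have hnum : cnt n t (fun s => ((posOf s (m + 1) j : ℤ) = (i : ℤ) + k)
        ∧ FEv j m i hist t s)
      = cnt n m (FEv j m i hist m) * ckNat n i k * ((n - 1) * n) ^ d := by
    conv_lhs => rw [hd]
    rw [cnt_chain n j m i hist hj1 hj2
        (fun s => ((posOf s (m + 1) j : ℤ) = (i : ℤ) + k)) hGE d,
      cnt_num_base n j m i hist k hi1 hi2]
  have hden : cnt n t (FEv j m i hist t)
      = cnt n m (FEv j m i hist m) * ((n - 1) * n) * ((n - 1) * n) ^ d := by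
    conv_lhs => rw [hd]
    have e1 : cnt n (m + 1 + d) (FEv j m i hist (m + 1 + d))
        = cnt n (m + 1 + d) (fun s => True ∧ FEv j m i hist (m + 1 + d) s) :=
      cnt_congr (fun ω => by simp)
    rw [e1, cnt_chain n j m i hist hj1 hj2 (fun _ => True) (fun _ _ _ _ => Iff.rfl) d,
      cnt_step n j m i m hist hj1 hj2 (le_refl m) (fun _ => True) (fun _ _ => Iff.rfl)]
    have e2 : cnt n m (fun s => True ∧ FEv j m i hist m s) = cnt n m (FEv j m i hist m) :=
      cnt_congr (fun ω => by simp)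
    rw [e2]
  -- positivity
  have hposn : (0 : ℝ) < (n : ℝ) ^ (2 * t) := by positivity
  have hFdef : prS n t (fun s => posOf s m j = i ∧ (∀ l < m, posOf s l j = hist l) ∧ inA s t j)
      = (cnt n t (FEv j m i hist t) : ℝ) / (n : ℝ) ^ (2 * t) := rfl
  have hnn : 0 < (n - 1) * n := Nat.mul_pos (by omega) (by omega)
  have hA : 0 < cnt n m (FEv j m i hist m) := by
    rw [hFdef] at hpos
    by_contra h0
    have h0' : cnt n m (FEv j m i hist m) = 0 := by omega
    rw [hden, h0'] at hpos
    simp at hpos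
  -- reduce cprS to a ratio of counts
  show ((cnt n t (fun s => ((posOf s (m + 1) j : ℤ) = (i : ℤ) + k)
        ∧ FEv j m i hist t s) : ℝ) / (n : ℝ) ^ (2 * t))
      / ((cnt n t (FEv j m i hist t) : ℝ) / (n : ℝ) ^ (2 * t)) = _
  rw [hnum, hden]
  have hCpos : 0 < cnt n m (FEv j m i hist m) * ((n - 1) * n) ^ d :=
    Nat.mul_pos hA (pow_pos hnn d)
  have hC : ((cnt n m (FEv j m i hist m) * ((n - 1) * n) ^ d : ℕ) : ℝ) ≠ 0 := by
    exact_mod_cast hCpos.ne'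
  have hden0 : ((cnt n m (FEv j m i hist m) * ((n - 1) * n) * ((n - 1) * n) ^ d : ℕ) : ℝ) ≠ 0 := by
    have : 0 < cnt n m (FEv j m i hist m) * ((n - 1) * n) * ((n - 1) * n) ^ d :=
      Nat.mul_pos (Nat.mul_pos hA hnn) (pow_pos hnn d)
    exact_mod_cast this.ne'
  have hcancel : ∀ x y : ℝ, y ≠ 0 → x / (n : ℝ) ^ (2 * t) / (y / (n : ℝ) ^ (2 * t)) = x / y := by
    intro x y hy
    field_simp
  rw [hcancel _ _ hden0]
  have e3 : cnt n m (FEv j m i hist m) * ckNat n i k * ((n - 1) * n) ^ d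
      = ckNat n i k * (cnt n m (FEv j m i hist m) * ((n - 1) * n) ^ d) := by ring
  have e4 : cnt n m (FEv j m i hist m) * ((n - 1) * n) * ((n - 1) * n) ^ d
      = ((n - 1) * n) * (cnt n m (FEv j m i hist m) * ((n - 1) * n) ^ d) := by ring
  rw [e3, e4, Nat.cast_mul, Nat.cast_mul (((n-1)*n : ℕ)), mul_div_mul_right _ _ hC]
  -- final arithmetic case analysis
  have hcast1 : (((n - 1) * n : ℕ) : ℝ) = ((n : ℝ) - 1) * (n : ℝ) := by
    push_cast [Nat.cast_sub (by omega : 1 ≤ n)]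
    ring
  have hn0 : (n : ℝ) ≠ 0 := by
    have : (0:ℝ) < (n:ℝ) := by exact_mod_cast (by omega : 0 < n)
    exact this.ne'
  have hn1' : (n : ℝ) - 1 ≠ 0 := by
    have h2 : (2:ℝ) ≤ (n:ℝ) := by exact_mod_cast hn
    intro h
    nlinarith
  have hne : ((n : ℝ) - 1) * (n : ℝ) ≠ 0 := mul_ne_zero hn1' hn0
  have hne' : (n : ℝ) * ((n : ℝ) - 1) ≠ 0 := mul_ne_zero hn0 hn1'
  rw [hcast1]
  by_cases hk1 : k = 1
  · subst hk1
    rw [if_pos rfl]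
    have hck : (ckNat n i 1 : ℝ) = ((n : ℝ) - (i : ℝ)) * (i : ℝ) := by
      unfold ckNat
      rw [if_pos rfl]
      push_cast [Nat.cast_sub hi2]
      ring
    rw [hck, div_eq_div_iff hne hne']
    ring
  rw [if_neg hk1]
  by_cases hk2 : k = -1
  · subst hk2
    rw [if_pos rfl]
    have hck : (ckNat n i (-1) : ℝ) = ((i : ℝ) - 1) * ((n : ℝ) - (i : ℝ) + 1) := by
      unfold ckNat
      rw [if_neg hk1, if_pos rfl]
      push_cast [Nat.cast_sub hi1, Nat.cast_sub (by omega : i - 1 ≤ n)]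
      ring
    rw [hck, div_eq_div_iff hne hne']
    ring
  rw [if_neg hk2]
  by_cases hk3 : k = 0
  · subst hk3
    rw [if_pos rfl]
    have hck : (ckNat n i 0 : ℝ) = ((i : ℝ) - 1) ^ 2 + ((n : ℝ) - (i : ℝ)) ^ 2 := by
      unfold ckNat
      rw [if_neg hk1, if_neg hk2, if_pos rfl]
      push_cast [Nat.cast_sub hi1, Nat.cast_sub hi2]
      ring
    rw [hck, div_eq_div_iff hne hne']
    ring
  rw [if_neg hk3]
  have hck : (ckNat n i k : ℝ) = 0 := by
    unfold ckNat
    rw [if_neg hk1, if_neg hk2, if_neg hk3]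
    simp
  rw [hck, zero_div]
end

section
/- Let n, t ∈ ℕ with n ≥ 2, let B ⊂ {1,…,n} be a random set defined on the probability space of the shuffle, and let D ⊂ {1,…,n} be a deterministic set. Suppose there is c > 0 such that min_{j∈D} ℙ_id^n( j ∈ B | j ∈ A^t ) ≥ c. Set K = E_id^n |D ∩ A^t| and assume K > 0. Then for every r ∈ (0,1): ℙ_id^n( |B ∩ D ∩ A^t| ≤ r · E_id^n[ |B ∩ D ∩ A^t| ] ) ≤ ( K + (1 − c²)·K² ) / ( (1−r)²·c²·K² ). -/
open Finset Filter MeasureTheory Asymptotics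
open scoped Classical Topology

section SecondMomentAux

private lemma moveCard_bounds_s8 {n i j p : ℕ} (hi : 1 ≤ i ∧ i ≤ n) (hj : 1 ≤ j ∧ j ≤ n)
    (hp : 1 ≤ p ∧ p ≤ n) : 1 ≤ moveCard i j p ∧ moveCard i j p ≤ n := by
  unfold moveCard; split_ifs <;> omega

private lemma moveCard_inj' {n i j p q : ℕ} (hi : 1 ≤ i ∧ i ≤ n) (hj : 1 ≤ j ∧ j ≤ n)
    (hp : 1 ≤ p ∧ p ≤ n) (hq : 1 ≤ q ∧ q ≤ n) (hpq : p ≠ q) :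
    moveCard i j p ≠ moveCard i j q := by
  unfold moveCard; split_ifs <;> omega

private lemma posFrom_shift (σ0 : ℕ → ℕ) (s : ℕ → ℕ × ℕ) (m k : ℕ) :
    posFrom σ0 s (m + 1) k
      = posFrom (fun l => moveCard (s 0).1 (s 0).2 (σ0 l)) (fun i => s (i + 1)) m k := by
  induction m with
  | zero => rfl
  | succ m ih => simp only [posFrom] at ih ⊢; rw [ih]

private lemma inAFrom_succ_iff (σ0 : ℕ → ℕ) (s : ℕ → ℕ × ℕ) (T k : ℕ) :
    inAFrom σ0 s (T + 1) k ↔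
      ((s 0).1 ≠ σ0 k ∧
        inAFrom (fun l => moveCard (s 0).1 (s 0).2 (σ0 l)) (fun i => s (i + 1)) T k) := by
  constructor
  · intro h
    refine ⟨h 0 (Nat.succ_pos T), fun m hm => ?_⟩
    have := h (m + 1) (by omega)
    rwa [posFrom_shift] at this
  · rintro ⟨h0, h⟩ m hm
    match m with
    | 0 => exact h0
    | m + 1 => rw [posFrom_shift]; exact h m (by omega)

private lemma extSeq_cons_zero {n T : ℕ} (a : Fin n × Fin n) (ω : Fin T → Fin n × Fin n) :
    extSeq (Fin.cons a ω) 0 = (a.1.val + 1, a.2.val + 1) := by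
  unfold extSeq
  rw [dif_pos (Nat.succ_pos T)]
  rfl

private lemma extSeq_cons_succ {n T : ℕ} (a : Fin n × Fin n) (ω : Fin T → Fin n × Fin n) :
    (fun m => extSeq (Fin.cons a ω) (m + 1)) = extSeq ω := by
  funext m
  unfold extSeq
  by_cases h : m < T
  · rw [dif_pos (by omega : m + 1 < T + 1), dif_pos h]
    have he : (⟨m + 1, by omega⟩ : Fin (T + 1)) = Fin.succ ⟨m, h⟩ := rfl
    rw [he, Fin.cons_succ]
  · rw [dif_neg (by omega), dif_neg h]

private lemma card_filter_fin (n p q : ℕ) (hp1 : 1 ≤ p) (hp2 : p ≤ n) (hq1 : 1 ≤ q)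
    (hq2 : q ≤ n) :
    (Finset.univ.filter (fun a : Fin n => a.val + 1 ≠ p ∧ a.val + 1 ≠ q)).card
      = n - (if p = q then 1 else 2) := by
  rw [Finset.card_filter]
  rw [Fin.sum_univ_eq_sum_range (fun x => if x + 1 ≠ p ∧ x + 1 ≠ q then 1 else 0)]
  rw [← Finset.card_filter]
  have hsub : ({p - 1, q - 1} : Finset ℕ) ⊆ Finset.range n := by
    intro x hx
    simp only [Finset.mem_insert, Finset.mem_singleton] at hx
    rw [Finset.mem_range]; omega
  have heq : (Finset.range n).filter (fun x => x + 1 ≠ p ∧ x + 1 ≠ q)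
      = Finset.range n \ {p - 1, q - 1} := by
    ext x
    simp only [Finset.mem_filter, Finset.mem_sdiff, Finset.mem_range, Finset.mem_insert,
      Finset.mem_singleton]
    omega
  rw [heq, Finset.card_sdiff_of_subset hsub, Finset.card_range]
  congr 1
  split_ifs with h
  · subst h; simp
  · rw [Finset.card_insert_of_notMem (by simp only [Finset.mem_singleton]; omega),
      Finset.card_singleton]

private lemma boole_mul_boole (P Q : Prop) [Decidable P] [Decidable Q] :
    (if P then (1 : ℝ) else 0) * (if Q then (1 : ℝ) else 0) = if P ∧ Q then (1 : ℝ) else 0 := by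
  split_ifs <;> simp_all

private lemma countPair {n : ℕ} (i j : ℕ) (T : ℕ) :
    ∀ σ0 : ℕ → ℕ, (1 ≤ σ0 i ∧ σ0 i ≤ n) → (1 ≤ σ0 j ∧ σ0 j ≤ n) → (i ≠ j → σ0 i ≠ σ0 j) →
      (Finset.univ.filter (fun ω : Fin T → Fin n × Fin n =>
          inAFrom σ0 (extSeq ω) T i ∧ inAFrom σ0 (extSeq ω) T j)).card
        = (n * (n - if i = j then 1 else 2)) ^ T := by
  induction T with
  | zero =>
      intro σ0 _ _ _
      have h1 : ∀ ω : Fin 0 → Fin n × Fin n,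
          inAFrom σ0 (extSeq ω) 0 i ∧ inAFrom σ0 (extSeq ω) 0 j :=
        fun ω => ⟨fun m hm => absurd hm (Nat.not_lt_zero m),
          fun m hm => absurd hm (Nat.not_lt_zero m)⟩
      rw [Finset.filter_true_of_mem (fun ω _ => h1 ω)]
      simp
  | succ T ih =>
      intro σ0 hi hj hij
      rw [Finset.card_filter]
      have hsum : (∑ ω : Fin (T + 1) → Fin n × Fin n,
            if inAFrom σ0 (extSeq ω) (T + 1) i ∧ inAFrom σ0 (extSeq ω) (T + 1) j then 1 else 0)
          = ∑ p : (Fin n × Fin n) × (Fin T → Fin n × Fin n),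
              if inAFrom σ0 (extSeq (Fin.cons p.1 p.2)) (T + 1) i ∧
                  inAFrom σ0 (extSeq (Fin.cons p.1 p.2)) (T + 1) j then 1 else 0 :=
        (Fintype.sum_equiv (Fin.consEquiv (fun _ : Fin (T + 1) => Fin n × Fin n))
          _ _ (fun p => rfl)).symm
      rw [hsum, Fintype.sum_prod_type]
      have key : ∀ (a : Fin n × Fin n) (ω' : Fin T → Fin n × Fin n),
          (inAFrom σ0 (extSeq (Fin.cons a ω')) (T + 1) i ∧
            inAFrom σ0 (extSeq (Fin.cons a ω')) (T + 1) j)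
          ↔ ((a.1.val + 1 ≠ σ0 i ∧ a.1.val + 1 ≠ σ0 j) ∧
              (inAFrom (fun l => moveCard (a.1.val + 1) (a.2.val + 1) (σ0 l)) (extSeq ω') T i ∧
               inAFrom (fun l => moveCard (a.1.val + 1) (a.2.val + 1) (σ0 l)) (extSeq ω') T j)) := by
        intro a ω'
        rw [inAFrom_succ_iff, inAFrom_succ_iff, extSeq_cons_succ, extSeq_cons_zero]
        tauto
      have hinner : ∀ a : Fin n × Fin n,
          (∑ ω' : Fin T → Fin n × Fin n,
            if inAFrom σ0 (extSeq (Fin.cons a ω')) (T + 1) i ∧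
                inAFrom σ0 (extSeq (Fin.cons a ω')) (T + 1) j then 1 else 0)
          = if a.1.val + 1 ≠ σ0 i ∧ a.1.val + 1 ≠ σ0 j
              then (n * (n - if i = j then 1 else 2)) ^ T else 0 := by
        intro a
        have ha1 : 1 ≤ a.1.val + 1 ∧ a.1.val + 1 ≤ n := ⟨Nat.le_add_left 1 _, a.1.isLt⟩
        have ha2 : 1 ≤ a.2.val + 1 ∧ a.2.val + 1 ≤ n := ⟨Nat.le_add_left 1 _, a.2.isLt⟩
        by_cases hc : a.1.val + 1 ≠ σ0 i ∧ a.1.val + 1 ≠ σ0 j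
        · rw [if_pos hc]
          have hih := ih (fun l => moveCard (a.1.val + 1) (a.2.val + 1) (σ0 l))
            (moveCard_bounds_s8 ha1 ha2 hi) (moveCard_bounds_s8 ha1 ha2 hj)
            (fun hne => moveCard_inj' ha1 ha2 hi hj (hij hne))
          rw [Finset.card_filter] at hih
          rw [← hih]
          exact Finset.sum_congr rfl fun ω' _ =>
            if_congr ((key a ω').trans (and_iff_right hc)) rfl rfl
        · rw [if_neg hc]
          refine Finset.sum_eq_zero fun ω' _ => ?_
          rw [if_congr (key a ω') rfl rfl, if_neg (by tauto)]
      have hd : (if σ0 i = σ0 j then 1 else 2) = (if i = j then 1 else 2) := by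
        by_cases h : i = j
        · subst h; simp
        · rw [if_neg (hij h), if_neg h]
      calc (∑ a : Fin n × Fin n, ∑ ω' : Fin T → Fin n × Fin n,
              if inAFrom σ0 (extSeq (Fin.cons a ω')) (T + 1) i ∧
                  inAFrom σ0 (extSeq (Fin.cons a ω')) (T + 1) j then 1 else 0)
          = ∑ a : Fin n × Fin n, if a.1.val + 1 ≠ σ0 i ∧ a.1.val + 1 ≠ σ0 j
              then (n * (n - if i = j then 1 else 2)) ^ T else 0 :=
            Finset.sum_congr rfl fun a _ => hinner a
        _ = ∑ x : Fin n, ∑ _y : Fin n, (if x.val + 1 ≠ σ0 i ∧ x.val + 1 ≠ σ0 j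
              then (n * (n - if i = j then 1 else 2)) ^ T else 0) :=
            Fintype.sum_prod_type _
        _ = ∑ x : Fin n, (n : ℕ) * (if x.val + 1 ≠ σ0 i ∧ x.val + 1 ≠ σ0 j
              then (n * (n - if i = j then 1 else 2)) ^ T else 0) :=
            Finset.sum_congr rfl fun x _ => by
              rw [Finset.sum_const, Finset.card_univ, Fintype.card_fin, smul_eq_mul]
        _ = n * ∑ x : Fin n, (if x.val + 1 ≠ σ0 i ∧ x.val + 1 ≠ σ0 j
              then (n * (n - if i = j then 1 else 2)) ^ T else 0) :=
            (Finset.mul_sum _ _ _).symm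
        _ = n * ((Finset.univ.filter
              (fun x : Fin n => x.val + 1 ≠ σ0 i ∧ x.val + 1 ≠ σ0 j)).card
              * (n * (n - if i = j then 1 else 2)) ^ T) := by
            rw [← Finset.sum_filter, Finset.sum_const, smul_eq_mul]
        _ = (n * (n - if i = j then 1 else 2)) ^ (T + 1) := by
            rw [card_filter_fin n (σ0 i) (σ0 j) hi.1 hi.2 hj.1 hj.2, hd, pow_succ]
            ring


private lemma exS_sum_comm (n T : ℕ) (D : Finset ℕ) (f : ℕ → (ℕ → ℕ × ℕ) → ℝ) :
    exS n T (fun s => ∑ j ∈ D, f j s) = ∑ j ∈ D, exS n T (f j) := by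
  simp only [exS]
  rw [← Finset.sum_div]
  congr 1
  exact Finset.sum_comm

private lemma exS_boole (n T : ℕ) (E : (ℕ → ℕ × ℕ) → Prop)
    {inst : (s : ℕ → ℕ × ℕ) → Decidable (E s)} :
    exS n T (fun s => @ite ℝ (E s) (inst s) 1 0) = prS n T E := by
  have hpt : ∀ ω : Fin T → Fin n × Fin n,
      (@ite ℝ (E (extSeq ω)) (inst (extSeq ω)) 1 0) = (if E (extSeq ω) then (1 : ℝ) else 0) :=
    fun ω => if_congr Iff.rfl rfl rfl
  simp only [exS, prS]
  rw [Finset.sum_congr rfl fun ω _ => hpt ω, Finset.sum_boole]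
  congr 1
  norm_cast
  apply congrArg Finset.card
  ext ω
  simp only [Finset.mem_filter]

private lemma prS_nonneg (n T : ℕ) (E : (ℕ → ℕ × ℕ) → Prop) : 0 ≤ prS n T E := by
  simp only [prS]; positivity

private lemma cheb {n T : ℕ} (hn : 0 < n) (X : (ℕ → ℕ × ℕ) → ℝ) (r : ℝ) (hr1 : r < 1)
    (hμpos : 0 < exS n T X) :
    prS n T (fun s => X s ≤ r * exS n T X) * ((1 - r) * exS n T X) ^ 2
      ≤ exS n T (fun s => X s ^ 2) - (exS n T X) ^ 2 := by
  set μ := exS n T X with hμ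
  have hNpos : (0 : ℝ) < (n : ℝ) ^ (2 * T) := by positivity
  have hcard : ((Finset.univ : Finset (Fin T → Fin n × Fin n)).card : ℝ) = (n : ℝ) ^ (2 * T) := by
    rw [Finset.card_univ]
    have hcf : Fintype.card (Fin T → Fin n × Fin n) = (n * n) ^ T := by
      simp [Fintype.card_fun]
    rw [hcf, pow_mul, sq]
    push_cast
    ring
  have hμsum : ∑ ω : Fin T → Fin n × Fin n, X (extSeq ω) = (n : ℝ) ^ (2 * T) * μ := by
    rw [hμ]; simp only [exS]; field_simp
  set Ev := Finset.univ.filter (fun ω : Fin T → Fin n × Fin n => X (extSeq ω) ≤ r * μ) with hEv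
  have h1 : (Ev.card : ℝ) * ((1 - r) * μ) ^ 2 ≤ ∑ ω ∈ Ev, (X (extSeq ω) - μ) ^ 2 := by
    calc (Ev.card : ℝ) * ((1 - r) * μ) ^ 2 = ∑ _ω ∈ Ev, ((1 - r) * μ) ^ 2 := by
          rw [Finset.sum_const, nsmul_eq_mul]
      _ ≤ ∑ ω ∈ Ev, (X (extSeq ω) - μ) ^ 2 := by
          refine Finset.sum_le_sum fun ω hω => ?_
          have hxe : X (extSeq ω) ≤ r * μ := (Finset.mem_filter.mp hω).2
          nlinarith [mul_nonneg (sub_nonneg.mpr hxe)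
            (show (0 : ℝ) ≤ (2 - r) * μ - X (extSeq ω) by nlinarith)]
  have h2 : ∑ ω ∈ Ev, (X (extSeq ω) - μ) ^ 2
      ≤ ∑ ω : Fin T → Fin n × Fin n, (X (extSeq ω) - μ) ^ 2 :=
    Finset.sum_le_sum_of_subset_of_nonneg (Finset.subset_univ _) (fun ω _ _ => sq_nonneg _)
  have h3 : ∑ ω : Fin T → Fin n × Fin n, (X (extSeq ω) - μ) ^ 2
      = (∑ ω : Fin T → Fin n × Fin n, X (extSeq ω) ^ 2) - (n : ℝ) ^ (2 * T) * μ ^ 2 := by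
    rw [Finset.sum_congr rfl (fun (ω : Fin T → Fin n × Fin n) _ =>
      show (X (extSeq ω) - μ) ^ 2 = X (extSeq ω) ^ 2 - 2 * μ * X (extSeq ω) + μ ^ 2 by ring)]
    rw [Finset.sum_add_distrib, Finset.sum_sub_distrib, ← Finset.mul_sum, hμsum,
      Finset.sum_const, nsmul_eq_mul, hcard]
    ring
  have hkey : (Ev.card : ℝ) * ((1 - r) * μ) ^ 2
      ≤ (∑ ω : Fin T → Fin n × Fin n, X (extSeq ω) ^ 2) - (n : ℝ) ^ (2 * T) * μ ^ 2 :=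
    h1.trans (h2.trans (le_of_eq h3))
  have hprS : prS n T (fun s => X s ≤ r * μ) = (Ev.card : ℝ) / (n : ℝ) ^ (2 * T) := rfl
  have hexS2 : exS n T (fun s => X s ^ 2)
      = (∑ ω : Fin T → Fin n × Fin n, X (extSeq ω) ^ 2) / (n : ℝ) ^ (2 * T) := rfl
  have hid : ((∑ ω : Fin T → Fin n × Fin n, X (extSeq ω) ^ 2) / (n : ℝ) ^ (2 * T) - μ ^ 2)
        * (n : ℝ) ^ (2 * T)
      = (∑ ω : Fin T → Fin n × Fin n, X (extSeq ω) ^ 2) - (n : ℝ) ^ (2 * T) * μ ^ 2 := by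
    field_simp
  rw [hprS, hexS2, div_mul_eq_mul_div, div_le_iff₀ hNpos, hid]
  exact hkey

end SecondMomentAux

theorem second_moment_random_set (n t : ℕ) (hn : 2 ≤ n)
    (B : (ℕ → ℕ × ℕ) → Finset ℕ) (hB : ∀ s, B s ⊆ Finset.Icc 1 n)
    (D : Finset ℕ) (hD : D ⊆ Finset.Icc 1 n)
    (c : ℝ) (hc : 0 < c)
    (hmin : ∀ j ∈ D, c ≤ cprS n t (fun s => j ∈ B s) (fun s => inA s t j))
    (K : ℝ) (hK : K = exS n t (fun s => ((D.filter (fun j => inA s t j)).card : ℝ)))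
    (hKpos : 0 < K) (r : ℝ) (hr : r ∈ Set.Ioo (0 : ℝ) 1) :
    prS n t (fun s => (((B s ∩ D).filter (fun j => inA s t j)).card : ℝ)
        ≤ r * exS n t (fun s' => (((B s' ∩ D).filter (fun j => inA s' t j)).card : ℝ)))
      ≤ (K + (1 - c ^ 2) * K ^ 2) / ((1 - r) ^ 2 * c ^ 2 * K ^ 2) := by
  obtain ⟨hr0, hr1⟩ := hr
  have hn' : 0 < n := by omega
  have hNpos : (0 : ℝ) < (n : ℝ) ^ (2 * t) := by positivity
  set q1 : ℝ := (((n * (n - 1)) ^ t : ℕ) : ℝ) / (n : ℝ) ^ (2 * t) with hq1def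
  set q2 : ℝ := (((n * (n - 2)) ^ t : ℕ) : ℝ) / (n : ℝ) ^ (2 * t) with hq2def
  have hq1pos : 0 < q1 := by
    rw [hq1def]
    have : 0 < (n * (n - 1)) ^ t := pow_pos (Nat.mul_pos (by omega) (by omega)) t
    exact div_pos (by exact_mod_cast this) hNpos
  have hq2nonneg : 0 ≤ q2 := by rw [hq2def]; positivity
  -- q2 ≤ q1 ^ 2
  have hq2le : q2 ≤ q1 ^ 2 := by
    have hbase : n * (n - 2) * n ^ 2 ≤ (n * (n - 1)) ^ 2 := by
      obtain ⟨m, rfl⟩ : ∃ m, n = m + 2 := ⟨n - 2, by omega⟩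
      have e1 : m + 2 - 2 = m := by omega
      have e2 : m + 2 - 1 = m + 1 := by omega
      rw [e1, e2]
      nlinarith
    have hnat : (n * (n - 2)) ^ t * n ^ (2 * t) ≤ ((n * (n - 1)) ^ t) ^ 2 := by
      have e1 : (n * (n - 2)) ^ t * n ^ (2 * t) = (n * (n - 2) * n ^ 2) ^ t := by
        rw [pow_mul, ← mul_pow]
      have e2 : ((n * (n - 1)) ^ t) ^ 2 = ((n * (n - 1)) ^ 2) ^ t := by
        rw [← pow_mul, ← pow_mul, Nat.mul_comm t 2]
      rw [e1, e2]
      exact Nat.pow_le_pow_left hbase t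
    have hkey : (((n * (n - 2)) ^ t : ℕ) : ℝ) * (n : ℝ) ^ (2 * t)
        ≤ ((((n * (n - 1)) ^ t : ℕ) : ℝ)) ^ 2 := by
      have : ((n : ℕ) : ℝ) ^ (2 * t) = (((n ^ (2 * t) : ℕ)) : ℝ) := by push_cast; ring
      rw [this]
      exact_mod_cast hnat
    rw [hq1def, hq2def, div_pow, div_le_div_iff₀ hNpos (by positivity)]
    nlinarith [hkey, hNpos, (show (0:ℝ) ≤ (((n * (n - 2)) ^ t : ℕ) : ℝ) from Nat.cast_nonneg _)]
  -- exact counts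
  have hprA : ∀ j ∈ D, prS n t (fun s => inA s t j) = q1 := by
    intro j hj
    have hjm := Finset.mem_Icc.mp (hD hj)
    have hcp := countPair (n := n) j j t id ⟨hjm.1, hjm.2⟩ ⟨hjm.1, hjm.2⟩
      (fun h => absurd rfl h)
    rw [if_pos rfl] at hcp
    simp only [prS, hq1def]
    congr 1
    norm_cast
    rw [← hcp]
    apply congrArg Finset.card
    ext ω
    rw [Finset.mem_filter, Finset.mem_filter]
    simp only [Finset.mem_univ, true_and, inA, and_self]
  have hprA2 : ∀ i ∈ D, ∀ j ∈ D, i ≠ j →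
      prS n t (fun s => inA s t i ∧ inA s t j) = q2 := by
    intro i hi j hj hij
    have him := Finset.mem_Icc.mp (hD hi)
    have hjm := Finset.mem_Icc.mp (hD hj)
    have hcp := countPair (n := n) i j t id ⟨him.1, him.2⟩ ⟨hjm.1, hjm.2⟩ (fun _ => hij)
    rw [if_neg hij] at hcp
    simp only [prS, hq2def]
    congr 1
    norm_cast
  have hprAA : ∀ i ∈ D, prS n t (fun s => inA s t i ∧ inA s t i) = q1 := by
    intro i hi
    have hpe : (fun s => inA s t i ∧ inA s t i) = (fun s => inA s t i) :=
      funext fun s => propext and_self_iff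
    rw [hpe]
    exact hprA i hi
  -- the random variables
  set X : (ℕ → ℕ × ℕ) → ℝ :=
    fun s => (((B s ∩ D).filter (fun j => inA s t j)).card : ℝ) with hXdef
  set Y : (ℕ → ℕ × ℕ) → ℝ :=
    fun s => ((D.filter (fun j => inA s t j)).card : ℝ) with hYdef
  have hXj : ∀ s, X s = ∑ j ∈ D, (if j ∈ B s ∧ inA s t j then (1 : ℝ) else 0) := by
    intro s
    have hfe : (B s ∩ D).filter (fun j => inA s t j)
        = D.filter (fun j => j ∈ B s ∧ inA s t j) := by
      ext x
      simp only [Finset.mem_filter, Finset.mem_inter]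
      tauto
    show (((B s ∩ D).filter (fun j => inA s t j)).card : ℝ) = _
    rw [hfe, Finset.card_filter, Nat.cast_sum]
    exact Finset.sum_congr rfl fun j _ => by split_ifs <;> simp
  have hYj : ∀ s, Y s = ∑ j ∈ D, (if inA s t j then (1 : ℝ) else 0) := by
    intro s
    show ((D.filter (fun j => inA s t j)).card : ℝ) = _
    rw [Finset.card_filter, Nat.cast_sum]
    exact Finset.sum_congr rfl fun j _ => by split_ifs <;> simp
  -- K = |D| * q1
  have hKsum : K = ∑ j ∈ D, prS n t (fun s => inA s t j) := by
    rw [hK]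
    rw [show Y = fun s => ∑ j ∈ D, (if inA s t j then (1 : ℝ) else 0) from funext hYj]
    rw [exS_sum_comm]
    exact Finset.sum_congr rfl fun j _ => exS_boole n t _
  have hKq : K = (D.card : ℝ) * q1 := by
    rw [hKsum, Finset.sum_congr rfl (fun j hj => hprA j hj), Finset.sum_const, nsmul_eq_mul]
  -- μ ≥ c * K
  have hμsum : exS n t X = ∑ j ∈ D, prS n t (fun s => j ∈ B s ∧ inA s t j) := by
    rw [show X = fun s => ∑ j ∈ D, (if j ∈ B s ∧ inA s t j then (1 : ℝ) else 0)
      from funext hXj]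
    rw [exS_sum_comm]
    exact Finset.sum_congr rfl fun j _ => exS_boole n t _
  have hμlb : c * K ≤ exS n t X := by
    rw [hμsum, hKq]
    have hterm : ∀ j ∈ D, c * q1 ≤ prS n t (fun s => j ∈ B s ∧ inA s t j) := by
      intro j hj
      have h := hmin j hj
      simp only [cprS] at h
      rw [hprA j hj] at h
      exact (le_div_iff₀ hq1pos).mp h
    calc c * ((D.card : ℝ) * q1) = ∑ _j ∈ D, c * q1 := by
          rw [Finset.sum_const, nsmul_eq_mul]; ring
      _ ≤ ∑ j ∈ D, prS n t (fun s => j ∈ B s ∧ inA s t j) := Finset.sum_le_sum hterm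
  have hμpos : 0 < exS n t X := lt_of_lt_of_le (mul_pos hc hKpos) hμlb
  -- second moment of Y
  have hXY : ∀ s, X s ≤ Y s := by
    intro s
    have hsub : (B s ∩ D).filter (fun j => inA s t j) ⊆ D.filter (fun j => inA s t j) :=
      Finset.filter_subset_filter _ Finset.inter_subset_right
    show ((((B s ∩ D).filter (fun j => inA s t j)).card : ℕ) : ℝ)
      ≤ (((D.filter (fun j => inA s t j)).card : ℕ) : ℝ)
    exact_mod_cast Finset.card_le_card hsub
  have hX0 : ∀ s, 0 ≤ X s := fun s => Nat.cast_nonneg _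
  have hM2Y : exS n t (fun s => X s ^ 2) ≤ exS n t (fun s => Y s ^ 2) := by
    simp only [exS]
    have hsum : ∑ ω : Fin t → Fin n × Fin n, X (extSeq ω) ^ 2
        ≤ ∑ ω : Fin t → Fin n × Fin n, Y (extSeq ω) ^ 2 :=
      Finset.sum_le_sum fun ω _ => pow_le_pow_left₀ (hX0 _) (hXY _) 2
    exact (div_le_div_iff_of_pos_right hNpos).mpr hsum
  have hY2 : exS n t (fun s => Y s ^ 2) ≤ K + K ^ 2 := by
    have hY2j : ∀ s, Y s ^ 2
        = ∑ i ∈ D, ∑ j ∈ D, (if inA s t i ∧ inA s t j then (1 : ℝ) else 0) := by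
      intro s
      rw [hYj s, sq, Finset.sum_mul_sum]
      exact Finset.sum_congr rfl fun i _ => Finset.sum_congr rfl fun j _ =>
        boole_mul_boole _ _
    rw [show (fun s => Y s ^ 2) = fun s => ∑ i ∈ D, ∑ j ∈ D,
        (if inA s t i ∧ inA s t j then (1 : ℝ) else 0) from funext hY2j]
    rw [exS_sum_comm]
    have hin : ∀ i ∈ D, exS n t
          (fun s => ∑ j ∈ D, (if inA s t i ∧ inA s t j then (1 : ℝ) else 0))
        = ∑ j ∈ D, prS n t (fun s => inA s t i ∧ inA s t j) := by
      intro i _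
      rw [exS_sum_comm]
      exact Finset.sum_congr rfl fun j _ => exS_boole n t _
    rw [Finset.sum_congr rfl hin]
    have hterm : ∀ i ∈ D, ∀ j ∈ D,
        prS n t (fun s => inA s t i ∧ inA s t j)
          ≤ (if i = j then q1 else 0) + q1 ^ 2 := by
      intro i hi j hj
      by_cases h : i = j
      · subst h
        rw [if_pos rfl, hprAA i hi]
        nlinarith [hq1pos]
      · rw [if_neg h, hprA2 i hi j hj h, zero_add]
        exact hq2le
    calc (∑ i ∈ D, ∑ j ∈ D, prS n t (fun s => inA s t i ∧ inA s t j))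
        ≤ ∑ i ∈ D, ∑ j ∈ D, ((if i = j then q1 else 0) + q1 ^ 2) :=
          Finset.sum_le_sum fun i hi => Finset.sum_le_sum fun j hj => hterm i hi j hj
      _ = ∑ i ∈ D, (q1 + (D.card : ℝ) * q1 ^ 2) := by
          refine Finset.sum_congr rfl fun i hi => ?_
          rw [Finset.sum_add_distrib, Finset.sum_ite_eq D i (fun _ => q1), if_pos hi,
            Finset.sum_const, nsmul_eq_mul]
      _ = K + K ^ 2 := by
          rw [Finset.sum_const, nsmul_eq_mul, hKq]
          ring
  -- Chebyshev
  have hch := cheb hn' X r hr1 hμpos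
  have hM2 : exS n t (fun s => X s ^ 2) ≤ K + K ^ 2 := le_trans hM2Y hY2
  show prS n t (fun s => X s ≤ r * exS n t X) ≤ _
  have hrfin : (0 : ℝ) < (1 - r) ^ 2 * c ^ 2 * K ^ 2 := by
    have h1r : 0 < 1 - r := by linarith
    positivity
  rw [le_div_iff₀ hrfin]
  have hP0 : 0 ≤ prS n t (fun s => X s ≤ r * exS n t X) := prS_nonneg n t _
  have hμ2 : c ^ 2 * K ^ 2 ≤ (exS n t X) ^ 2 := by nlinarith [mul_pos hc hKpos]
  nlinarith [hch, hM2, hμ2, hP0,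
    mul_nonneg (mul_nonneg hP0 (sq_nonneg (1 - r)))
      (sub_nonneg.mpr hμ2)]
end

section
/- Fix distinct cards i, j. There exists a function ĝ : ℕ → [0,∞) with ĝ(n) = O(log² n) as n → ∞, independent of the parameters below, such that for every n ≥ 3, every real δ ≥ 0, every integer t with 0 ≤ t ≤ n·log n, and every j ∈ {1,…,n}: Σ_{m=2}^{n−1} 𝒫_{1,m}^{n,t}( {1,…,n} × (overline{j±δ}) ) ≤ 2δ + ĝ(n). -/
open Finset Filter MeasureTheory Asymptotics
open scoped Classical Topology

noncomputable section PB
namespace PB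
open Finset

/-- Position of a card starting at `x` under the pick sequence `s`. -/
def track (x : ℕ) (s : ℕ → ℕ × ℕ) : ℕ → ℕ
  | 0 => x
  | t + 1 => moveCard (s t).1 (s t).2 (track x s t)

lemma track_congr {x : ℕ} {s s' : ℕ → ℕ × ℕ} :
    ∀ {t : ℕ}, (∀ k < t, s k = s' k) → track x s t = track x s' t
  | 0, _ => rfl
  | t + 1, h => by
      simp only [track]
      rw [track_congr (fun k hk => h k (by omega)), h t (by omega)]

lemma posFrom_eq_track (σ0 : ℕ → ℕ) (s : ℕ → ℕ × ℕ) (k : ℕ) :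
    ∀ t, posFrom σ0 s t k = track (σ0 k) s t
  | 0 => rfl
  | t + 1 => by simp only [posFrom, track, posFrom_eq_track σ0 s k t]

/-- Both threads (starting at positions `x < y`) survive `t` steps. -/
def Sv (x y t : ℕ) (s : ℕ → ℕ × ℕ) : Prop :=
  ∀ l < t, (s l).1 ≠ track x s l ∧ (s l).1 ≠ track y s l

lemma Sv_mono {x y t : ℕ} {s : ℕ → ℕ × ℕ} (h : Sv x y (t + 1) s) : Sv x y t s :=
  fun l hl => h l (by omega)

lemma mc_lt {a b u v : ℕ} (h : u < v) (hu : a ≠ u) (hv : a ≠ v) :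
    moveCard a b u < moveCard a b v := by
  unfold moveCard; split_ifs <;> omega

lemma mc_bounds {n a b p : ℕ} (h1 : 1 ≤ p) (h2 : p ≤ n) (ha : 1 ≤ a) (han : a ≤ n)
    (hb : 1 ≤ b) (hbn : b ≤ n) (hpa : a ≠ p) :
    1 ≤ moveCard a b p ∧ moveCard a b p ≤ n := by
  unfold moveCard; split_ifs <;> omega

lemma mc_close {a b v p : ℕ} (hva : a ≠ v) (h : moveCard a b v = p) :
    v = p ∨ v + 1 = p ∨ v = p + 1 := by
  unfold moveCard at h; split_ifs at h <;> omega

lemma extSeq_lt {n T : ℕ} (ω : Fin T → Fin n × Fin n) {k : ℕ} (hk : k < T) :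
    extSeq ω k = ((ω ⟨k, hk⟩).1.val + 1, (ω ⟨k, hk⟩).2.val + 1) := by
  simp [extSeq, hk]

lemma extSeq_bounds {n T : ℕ} (ω : Fin T → Fin n × Fin n) {k : ℕ} (hk : k < T) :
    1 ≤ (extSeq ω k).1 ∧ (extSeq ω k).1 ≤ n ∧ 1 ≤ (extSeq ω k).2 ∧ (extSeq ω k).2 ≤ n := by
  rw [extSeq_lt ω hk]
  refine ⟨by omega, ?_, by omega, ?_⟩
  · exact Nat.succ_le_of_lt (ω ⟨k, hk⟩).1.isLt
  · exact Nat.succ_le_of_lt (ω ⟨k, hk⟩).2.isLt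

lemma extSeq_snoc_lt {n t : ℕ} (ω : Fin t → Fin n × Fin n) (c : Fin n × Fin n)
    {k : ℕ} (hk : k < t) :
    extSeq (Fin.snoc ω c) k = extSeq ω k := by
  have h1 : k < t + 1 := by omega
  rw [extSeq_lt _ h1, extSeq_lt _ hk]
  have : (⟨k, h1⟩ : Fin (t + 1)) = Fin.castSucc ⟨k, hk⟩ := rfl
  rw [this, Fin.snoc_castSucc]

lemma extSeq_snoc_last {n t : ℕ} (ω : Fin t → Fin n × Fin n) (c : Fin n × Fin n) :
    extSeq (Fin.snoc ω c) t = (c.1.val + 1, c.2.val + 1) := by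
  have h1 : t < t + 1 := by omega
  rw [extSeq_lt _ h1]
  have : (⟨t, h1⟩ : Fin (t + 1)) = Fin.last t := rfl
  rw [this, Fin.snoc_last]

lemma track_snoc {n t : ℕ} (x : ℕ) (ω : Fin t → Fin n × Fin n) (c : Fin n × Fin n)
    {k : ℕ} (hk : k ≤ t) :
    track x (extSeq (Fin.snoc ω c)) k = track x (extSeq ω) k :=
  track_congr (fun l hl => extSeq_snoc_lt ω c (by omega))

lemma track_snoc_succ {n t : ℕ} (x : ℕ) (ω : Fin t → Fin n × Fin n) (c : Fin n × Fin n) :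
    track x (extSeq (Fin.snoc ω c)) (t + 1)
      = moveCard (c.1.val + 1) (c.2.val + 1) (track x (extSeq ω) t) := by
  simp only [track]
  rw [extSeq_snoc_last, track_snoc x ω c le_rfl]

lemma Sv_snoc {n t : ℕ} (x y : ℕ) (ω : Fin t → Fin n × Fin n) (c : Fin n × Fin n) :
    Sv x y (t + 1) (extSeq (Fin.snoc ω c)) ↔
      Sv x y t (extSeq ω) ∧
        c.1.val + 1 ≠ track x (extSeq ω) t ∧ c.1.val + 1 ≠ track y (extSeq ω) t := by
  constructor
  · intro h
    refine ⟨fun l hl => ?_, ?_, ?_⟩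
    · have := h l (by omega)
      rwa [extSeq_snoc_lt ω c hl, track_snoc x ω c hl.le, track_snoc y ω c hl.le] at this
    · have := (h t (by omega)).1
      rwa [extSeq_snoc_last, track_snoc x ω c le_rfl] at this
    · have := (h t (by omega)).2
      rwa [extSeq_snoc_last, track_snoc y ω c le_rfl] at this
  · rintro ⟨hS, h1, h2⟩ l hl
    rcases Nat.lt_or_ge l t with hlt | hge
    · rw [extSeq_snoc_lt ω c hlt, track_snoc x ω c hlt.le, track_snoc y ω c hlt.le]
      exact hS l hlt
    · have hl' : l = t := by omega
      subst hl'
      rw [extSeq_snoc_last, track_snoc x ω c le_rfl, track_snoc y ω c le_rfl]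
      exact ⟨h1, h2⟩

/-- Invariant: both threads stay in `[1,n]` and ordered. -/
lemma inv_general {n x y : ℕ} {s : ℕ → ℕ × ℕ} (hx : 1 ≤ x) (hxy : x < y) (hy : y ≤ n) :
    ∀ {t : ℕ}, (∀ k < t, 1 ≤ (s k).1 ∧ (s k).1 ≤ n ∧ 1 ≤ (s k).2 ∧ (s k).2 ≤ n) →
      Sv x y t s →
      1 ≤ track x s t ∧ track x s t < track y s t ∧ track y s t ≤ n := by
  intro t
  induction t with
  | zero => intro _ _; exact ⟨hx, hxy, hy⟩
  | succ t ih =>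
      intro hb hS
      have hprev := ih (fun k hk => hb k (by omega)) (Sv_mono hS)
      have hstep := hS t (by omega)
      have hbt := hb t (by omega)
      simp only [track]
      obtain ⟨hu1, huv, hvn⟩ := hprev
      have h1 := mc_bounds (n := n) hu1 (by omega) hbt.1 hbt.2.1 hbt.2.2.1 hbt.2.2.2
        (hstep.1)
      have h2 := mc_bounds (n := n) (by omega : 1 ≤ track y s t) hvn hbt.1 hbt.2.1
        hbt.2.2.1 hbt.2.2.2 (hstep.2)
      exact ⟨h1.1, mc_lt huv (hstep.1) (hstep.2), h2.2⟩



/-- Peel the last step of a trajectory. -/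
lemma card_filter_succ {β : Type*} [Fintype β] (t : ℕ) (P : (Fin (t + 1) → β) → Prop)
    [DecidablePred P] [∀ ω : Fin t → β, DecidablePred (fun c => P (Fin.snoc ω c))] :
    ((univ : Finset (Fin (t + 1) → β)).filter P).card
      = ∑ ω : Fin t → β, ((univ : Finset β).filter (fun c => P (Fin.snoc ω c))).card := by
  classical
  rw [Finset.card_filter]
  rw [← Equiv.sum_comp (Fin.snocEquiv (fun _ => β)) (fun ω' => if P ω' then (1 : ℕ) else 0)]
  rw [Fintype.sum_prod_type]
  rw [Finset.sum_comm]
  refine Finset.sum_congr rfl (fun ω _ => ?_)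
  rw [Finset.card_filter]
  refine Finset.sum_congr rfl (fun c _ => ?_)
  congr 1

lemma card_filter_le_target {α : Type*} [Fintype α] (P : α → Prop) [DecidablePred P]
    (f : α → ℕ × ℕ)
    (hf : Function.Injective f) (S : Finset (ℕ × ℕ)) (h : ∀ a, P a → f a ∈ S) :
    ((univ : Finset α).filter P).card ≤ S.card := by
  classical
  exact Finset.card_le_card_of_injOn f
    (fun a ha => h a ((Finset.mem_filter.mp ha).2)) (fun a _ b _ hab => hf hab)

lemma card_filter_fin_le {n : ℕ} (P : Fin n × Fin n → Prop) [DecidablePred P]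
    (S : Finset (ℕ × ℕ))
    (h : ∀ c : Fin n × Fin n, P c → (c.1.val + 1, c.2.val + 1) ∈ S) :
    ((univ : Finset (Fin n × Fin n)).filter P).card ≤ S.card := by
  refine card_filter_le_target P (fun c => (c.1.val + 1, c.2.val + 1)) ?_ S h
  intro c d hcd
  simp only [Prod.mk.injEq] at hcd
  have h1 : c.1 = d.1 := Fin.ext (by omega)
  have h2 : c.2 = d.2 := Fin.ext (by omega)
  exact Prod.ext h1 h2

/-- Number of trajectories along which both threads survive and the second thread ends
at position `p`. -/
def cntE (n t x y p : ℕ) : ℕ :=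
  ((univ : Finset (Fin t → Fin n × Fin n)).filter
    (fun ω => Sv x y t (extSeq ω) ∧ track y (extSeq ω) t = p)).card

/-- Number of trajectories along which both threads survive. -/
def cntS (n t x y : ℕ) : ℕ :=
  ((univ : Finset (Fin t → Fin n × Fin n)).filter (fun ω => Sv x y t (extSeq ω))).card

lemma cntE_zero {n t x y p : ℕ} (hx : 1 ≤ x) (hxy : x < y) (hy : y ≤ n)
    (hp : p < 2 ∨ n < p) : cntE n t x y p = 0 := by
  unfold cntE
  rw [Finset.card_eq_zero, Finset.filter_eq_empty_iff]
  rintro ω - ⟨hS, hptr⟩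
  have := inv_general (s := extSeq ω) hx hxy hy (fun k hk => extSeq_bounds ω hk) hS
  omega


/-- Coefficient bound for the one-step transition of the second thread. -/
lemma inner_le {n u v p : ℕ} (hu : 1 ≤ u) (huv : u < v) (hvn : v ≤ n)
    (hp2 : 2 ≤ p) (hpn : p ≤ n) :
    ((univ : Finset (Fin n × Fin n)).filter
      (fun c => (c.1.val + 1 ≠ u ∧ c.1.val + 1 ≠ v)
        ∧ moveCard (c.1.val + 1) (c.2.val + 1) v = p)).card
    ≤ if v = p then (p - 2) * (p - 1) + (n - p) * (n - p)
      else if v + 1 = p then (n - p + 1) * (p - 1)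
      else if v = p + 1 then (p - 1) * (n - p) else 0 := by
  classical
  have hv1 : 1 ≤ v := by omega
  by_cases h1 : v = p
  · subst h1
    rw [if_pos rfl]
    refine le_trans (card_filter_fin_le _
      (((Icc 1 (v - 1)).erase u ×ˢ Icc 1 (v - 1)) ∪ (Icc (v + 1) n ×ˢ Icc (v + 1) n)) ?_) ?_
    · rintro c ⟨⟨hau, hav⟩, hmc⟩
      set a := c.1.val + 1 with ha
      set b := c.2.val + 1 with hb
      have han : a ≤ n := Nat.succ_le_of_lt c.1.isLt
      have hbn : b ≤ n := Nat.succ_le_of_lt c.2.isLt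
      rcases Nat.lt_or_ge a v with hav' | hav'
      · have hblt : b < v := by unfold moveCard at hmc; split_ifs at hmc <;> omega
        refine Finset.mem_union_left _ ?_
        rw [Finset.mem_product]
        exact ⟨Finset.mem_erase.mpr ⟨hau, Finset.mem_Icc.mpr (by omega)⟩,
          Finset.mem_Icc.mpr (by omega)⟩
      · have hav'' : v < a := by omega
        have hbgt : v < b := by unfold moveCard at hmc; split_ifs at hmc <;> omega
        refine Finset.mem_union_right _ ?_
        rw [Finset.mem_product]
        exact ⟨Finset.mem_Icc.mpr (by omega), Finset.mem_Icc.mpr (by omega)⟩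
    · refine le_trans (Finset.card_union_le _ _) ?_
      rw [Finset.card_product, Finset.card_product]
      have h1 : ((Icc 1 (v - 1)).erase u).card = v - 2 := by
        rw [Finset.card_erase_of_mem (Finset.mem_Icc.mpr (by omega)), Nat.card_Icc]
        omega
      have h2 : (Icc 1 (v - 1)).card = v - 1 := by rw [Nat.card_Icc]; omega
      have h3 : (Icc (v + 1) n).card = n - v := by rw [Nat.card_Icc]; omega
      rw [h1, h2, h3]
  · by_cases h2 : v + 1 = p
    · simp only [if_neg h1, if_pos h2]
      refine le_trans (card_filter_fin_le _ (Icc p n ×ˢ Icc 1 (p - 1)) ?_) ?_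
      · rintro c ⟨⟨hau, hav⟩, hmc⟩
        set a := c.1.val + 1 with ha
        set b := c.2.val + 1 with hb
        have hfacts : p ≤ a ∧ b ≤ p - 1 := by
          unfold moveCard at hmc; split_ifs at hmc <;> omega
        rw [Finset.mem_product]
        have han : a ≤ n := Nat.succ_le_of_lt c.1.isLt
        exact ⟨Finset.mem_Icc.mpr (by omega), Finset.mem_Icc.mpr (by omega)⟩
      · rw [Finset.card_product, Nat.card_Icc, Nat.card_Icc]
        have : n + 1 - p = n - p + 1 := by omega
        rw [this]
        have : p - 1 + 1 - 1 = p - 1 := by omega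
        rw [this]
    · by_cases h3 : v = p + 1
      · simp only [if_neg h1, if_neg h2, if_pos h3]
        refine le_trans (card_filter_fin_le _ ((Icc 1 p).erase u ×ˢ Icc (p + 1) n) ?_) ?_
        · rintro c ⟨⟨hau, hav⟩, hmc⟩
          set a := c.1.val + 1 with ha
          set b := c.2.val + 1 with hb
          have hfacts : a ≤ p ∧ p + 1 ≤ b := by
            unfold moveCard at hmc; split_ifs at hmc <;> omega
          rw [Finset.mem_product]
          have hbn : b ≤ n := Nat.succ_le_of_lt c.2.isLt
          exact ⟨Finset.mem_erase.mpr ⟨hau, Finset.mem_Icc.mpr (by omega)⟩,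
            Finset.mem_Icc.mpr (by omega)⟩
        · rw [Finset.card_product,
            Finset.card_erase_of_mem (Finset.mem_Icc.mpr (by omega)), Nat.card_Icc,
            Nat.card_Icc]
          have e1 : p + 1 - 1 - 1 = p - 1 := by omega
          have e2 : n + 1 - (p + 1) = n - p := by omega
          rw [e1, e2]
      · rw [if_neg h1, if_neg h2, if_neg h3, Nat.le_zero, Finset.card_eq_zero,
          Finset.filter_eq_empty_iff]
        rintro c - ⟨⟨hau, hav⟩, hmc⟩
        rcases mc_close hav hmc with h | h | h <;> omega

/-- One-step recursion inequality for `cntE`. -/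
lemma cntE_step {n t x y p : ℕ} (hx : 1 ≤ x) (hxy : x < y) (hyn : y ≤ n)
    (hp2 : 2 ≤ p) (hpn : p ≤ n) :
    cntE n (t + 1) x y p ≤
      ((p - 2) * (p - 1) + (n - p) * (n - p)) * cntE n t x y p
      + ((n - p + 1) * (p - 1)) * cntE n t x y (p - 1)
      + ((p - 1) * (n - p)) * cntE n t x y (p + 1) := by
  classical
  unfold cntE
  rw [card_filter_succ]
  have key : ∀ ω : Fin t → Fin n × Fin n,
      ((univ : Finset (Fin n × Fin n)).filter
        (fun c => Sv x y (t + 1) (extSeq (Fin.snoc ω c))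
          ∧ track y (extSeq (Fin.snoc ω c)) (t + 1) = p)).card
      ≤ ((p - 2) * (p - 1) + (n - p) * (n - p)) *
          (if Sv x y t (extSeq ω) ∧ track y (extSeq ω) t = p then 1 else 0)
        + ((n - p + 1) * (p - 1)) *
          (if Sv x y t (extSeq ω) ∧ track y (extSeq ω) t = p - 1 then 1 else 0)
        + ((p - 1) * (n - p)) *
          (if Sv x y t (extSeq ω) ∧ track y (extSeq ω) t = p + 1 then 1 else 0) := by
    intro ω
    have hrw : ((univ : Finset (Fin n × Fin n)).filter
        (fun c => Sv x y (t + 1) (extSeq (Fin.snoc ω c))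
          ∧ track y (extSeq (Fin.snoc ω c)) (t + 1) = p))
        = ((univ : Finset (Fin n × Fin n)).filter
        (fun c => (Sv x y t (extSeq ω) ∧
            (c.1.val + 1 ≠ track x (extSeq ω) t ∧ c.1.val + 1 ≠ track y (extSeq ω) t))
          ∧ moveCard (c.1.val + 1) (c.2.val + 1) (track y (extSeq ω) t) = p)) := by
      refine Finset.filter_congr (fun c _ => ?_)
      rw [Sv_snoc, track_snoc_succ]
    rw [hrw]
    by_cases hSv : Sv x y t (extSeq ω)
    · have hinv := inv_general (s := extSeq ω) hx hxy hyn
        (fun k hk => extSeq_bounds ω hk) hSv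
      have hrw2 : ((univ : Finset (Fin n × Fin n)).filter
          (fun c => (Sv x y t (extSeq ω) ∧
              (c.1.val + 1 ≠ track x (extSeq ω) t ∧ c.1.val + 1 ≠ track y (extSeq ω) t))
            ∧ moveCard (c.1.val + 1) (c.2.val + 1) (track y (extSeq ω) t) = p))
          = ((univ : Finset (Fin n × Fin n)).filter
          (fun c => (c.1.val + 1 ≠ track x (extSeq ω) t
              ∧ c.1.val + 1 ≠ track y (extSeq ω) t)
            ∧ moveCard (c.1.val + 1) (c.2.val + 1) (track y (extSeq ω) t) = p)) := by
        refine Finset.filter_congr (fun c _ => ?_)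
        tauto
      rw [hrw2]
      refine le_trans (inner_le hinv.1 hinv.2.1 hinv.2.2 hp2 hpn) ?_
      by_cases e1 : track y (extSeq ω) t = p
      · have hc1 : Sv x y t (extSeq ω) ∧ track y (extSeq ω) t = p := ⟨hSv, e1⟩
        have hn2 : ¬(Sv x y t (extSeq ω) ∧ track y (extSeq ω) t = p - 1) := by
          rintro ⟨-, h⟩; omega
        have hn3 : ¬(Sv x y t (extSeq ω) ∧ track y (extSeq ω) t = p + 1) := by
          rintro ⟨-, h⟩; omega
        rw [if_pos e1, if_pos hc1, if_neg hn2, if_neg hn3]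
        simp
      · by_cases e2 : track y (extSeq ω) t + 1 = p
        · have hc2 : Sv x y t (extSeq ω) ∧ track y (extSeq ω) t = p - 1 := ⟨hSv, by omega⟩
          have hn1 : ¬(Sv x y t (extSeq ω) ∧ track y (extSeq ω) t = p) := by
            rintro ⟨-, h⟩; omega
          have hn3 : ¬(Sv x y t (extSeq ω) ∧ track y (extSeq ω) t = p + 1) := by
            rintro ⟨-, h⟩; omega
          rw [if_neg e1, if_pos e2, if_pos hc2, if_neg hn1, if_neg hn3]
          simp
        · by_cases e3 : track y (extSeq ω) t = p + 1
          · have hc3 : Sv x y t (extSeq ω) ∧ track y (extSeq ω) t = p + 1 := ⟨hSv, e3⟩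
            have hn1 : ¬(Sv x y t (extSeq ω) ∧ track y (extSeq ω) t = p) := by
              rintro ⟨-, h⟩; omega
            have hn2 : ¬(Sv x y t (extSeq ω) ∧ track y (extSeq ω) t = p - 1) := by
              rintro ⟨-, h⟩; omega
            rw [if_neg e1, if_neg e2, if_pos e3, if_pos hc3, if_neg hn1, if_neg hn2]
            simp
          · rw [if_neg e1, if_neg e2, if_neg e3]
            exact Nat.zero_le _
    · have : ((univ : Finset (Fin n × Fin n)).filter
          (fun c => (Sv x y t (extSeq ω) ∧
              (c.1.val + 1 ≠ track x (extSeq ω) t ∧ c.1.val + 1 ≠ track y (extSeq ω) t))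
            ∧ moveCard (c.1.val + 1) (c.2.val + 1) (track y (extSeq ω) t) = p)).card = 0 := by
        rw [Finset.card_eq_zero, Finset.filter_eq_empty_iff]
        rintro c - ⟨⟨hS, -⟩, -⟩
        exact hSv hS
      rw [this]
      exact Nat.zero_le _
  refine le_trans (Finset.sum_le_sum (fun ω _ => key ω)) ?_
  simp only [Finset.sum_add_distrib, ← Finset.mul_sum, ← Finset.card_filter]
  exact le_rfl

/-- Aggregated count over all starting positions of the second thread. -/
def Sc (n t p : ℕ) : ℕ := ∑ m ∈ Finset.Icc 2 (n - 1), cntE n t 1 m p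

lemma cntE_base {n m p : ℕ} : cntE n 0 1 m p = if m = p then 1 else 0 := by
  classical
  unfold cntE
  by_cases h : m = p
  · rw [if_pos h]
    have : ∀ ω : Fin 0 → Fin n × Fin n,
        (Sv 1 m 0 (extSeq ω) ∧ track m (extSeq ω) 0 = p) := by
      intro ω
      exact ⟨fun l hl => by omega, h⟩
    rw [Finset.filter_true_of_mem (fun ω _ => this ω)]
    simp
  · rw [if_neg h]
    rw [Finset.card_eq_zero, Finset.filter_eq_empty_iff]
    rintro ω - ⟨-, htr⟩
    exact h htr

/-- Main counting lemma: the aggregated endpoint count obeys the `(n-1)^{2t}` bound. -/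
lemma Sc_le (n : ℕ) (hn : 3 ≤ n) : ∀ t p, Sc n t p ≤ (n - 1) ^ (2 * t) := by
  intro t
  induction t with
  | zero =>
      intro p
      unfold Sc
      have : ∀ m ∈ Finset.Icc 2 (n - 1), cntE n 0 1 m p = if m = p then 1 else 0 :=
        fun m _ => cntE_base
      rw [Finset.sum_congr rfl this, Finset.sum_ite_eq' (Finset.Icc 2 (n - 1)) p (fun _ => 1)]
      by_cases hp : p ∈ Finset.Icc 2 (n - 1)
      · rw [if_pos hp]; simp
      · rw [if_neg hp]; simp
  | succ t ih =>
      intro p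
      by_cases hp : 2 ≤ p ∧ p ≤ n
      · have step : ∀ m ∈ Finset.Icc 2 (n - 1),
            cntE n (t + 1) 1 m p ≤
              ((p - 2) * (p - 1) + (n - p) * (n - p)) * cntE n t 1 m p
              + ((n - p + 1) * (p - 1)) * cntE n t 1 m (p - 1)
              + ((p - 1) * (n - p)) * cntE n t 1 m (p + 1) := by
          intro m hm
          rw [Finset.mem_Icc] at hm
          exact cntE_step le_rfl (by omega) (by omega) hp.1 hp.2
        have h1 : Sc n (t + 1) p ≤
            ((p - 2) * (p - 1) + (n - p) * (n - p)) * Sc n t p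
            + ((n - p + 1) * (p - 1)) * Sc n t (p - 1)
            + ((p - 1) * (n - p)) * Sc n t (p + 1) := by
          unfold Sc
          refine le_trans (Finset.sum_le_sum step) ?_
          rw [Finset.sum_add_distrib, Finset.sum_add_distrib, Finset.mul_sum,
            Finset.mul_sum, Finset.mul_sum]
        refine le_trans h1 ?_
        have hB := ih p
        have hBm := ih (p - 1)
        have hBp := ih (p + 1)
        have hcoef : (p - 2) * (p - 1) + (n - p) * (n - p)
            + (n - p + 1) * (p - 1) + (p - 1) * (n - p) = (n - 1) ^ 2 := by
          obtain ⟨hp1, hp2'⟩ := hp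
          have e1 : p - 1 = (p - 2) + 1 := by omega
          have e2 : n - p + 1 = (n - p) + 1 := by omega
          have e3 : n - 1 = (p - 2) + (n - p) + 1 := by omega
          rw [e1, e2, e3]
          ring
        calc ((p - 2) * (p - 1) + (n - p) * (n - p)) * Sc n t p
              + ((n - p + 1) * (p - 1)) * Sc n t (p - 1)
              + ((p - 1) * (n - p)) * Sc n t (p + 1)
            ≤ ((p - 2) * (p - 1) + (n - p) * (n - p)) * (n - 1) ^ (2 * t)
              + ((n - p + 1) * (p - 1)) * (n - 1) ^ (2 * t)
              + ((p - 1) * (n - p)) * (n - 1) ^ (2 * t) := by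
              gcongr
          _ = ((p - 2) * (p - 1) + (n - p) * (n - p)
              + (n - p + 1) * (p - 1) + (p - 1) * (n - p)) * (n - 1) ^ (2 * t) := by ring
          _ = (n - 1) ^ 2 * (n - 1) ^ (2 * t) := by rw [hcoef]
          _ = (n - 1) ^ (2 * (t + 1)) := by rw [← pow_add]; ring_nf
      · have : ∀ m ∈ Finset.Icc 2 (n - 1), cntE n (t + 1) 1 m p = 0 := by
          intro m hm
          rw [Finset.mem_Icc] at hm
          exact cntE_zero le_rfl (by omega) (by omega) (by omega)
        unfold Sc
        rw [Finset.sum_congr rfl this]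
        simp

/-- Lower bound for the number of trajectories along which both threads survive. -/
lemma cntS_ge (n : ℕ) (hn : 3 ≤ n) {x y : ℕ} (hx : 1 ≤ x) (hxy : x < y) (hyn : y ≤ n) :
    ∀ t, (n * (n - 2)) ^ t ≤ cntS n t x y := by
  intro t
  induction t with
  | zero =>
      rw [pow_zero]
      unfold cntS
      have hall : ∀ ω ∈ (univ : Finset (Fin 0 → Fin n × Fin n)), Sv x y 0 (extSeq ω) :=
        fun ω _ l hl => absurd hl (by omega)
      rw [Finset.filter_true_of_mem hall, Finset.card_univ]
      exact Fintype.card_pos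
  | succ t ih =>
      unfold cntS
      rw [card_filter_succ]
      have key : ∀ ω : Fin t → Fin n × Fin n, Sv x y t (extSeq ω) →
          n * (n - 2) ≤ ((univ : Finset (Fin n × Fin n)).filter
            (fun c => Sv x y (t + 1) (extSeq (Fin.snoc ω c)))).card := by
        intro ω hSv
        have hinv := inv_general (s := extSeq ω) hx hxy hyn
          (fun k hk => extSeq_bounds ω hk) hSv
        have hrw : ((univ : Finset (Fin n × Fin n)).filter
            (fun c => Sv x y (t + 1) (extSeq (Fin.snoc ω c))))
            = ((univ : Finset (Fin n × Fin n)).filter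
            (fun c => c.1.val + 1 ≠ track x (extSeq ω) t
              ∧ c.1.val + 1 ≠ track y (extSeq ω) t)) := by
          refine Finset.filter_congr (fun c _ => ?_)
          rw [Sv_snoc]
          constructor
          · rintro ⟨-, h⟩; exact h
          · intro h; exact ⟨hSv, h⟩
        rw [hrw]
        -- complement counting
        have htot := Finset.card_filter_add_card_filter_not
          (s := (univ : Finset (Fin n × Fin n)))
          (p := fun c => c.1.val + 1 ≠ track x (extSeq ω) t
            ∧ c.1.val + 1 ≠ track y (extSeq ω) t)
        have hneg : ((univ : Finset (Fin n × Fin n)).filter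
            (fun c => ¬(c.1.val + 1 ≠ track x (extSeq ω) t
              ∧ c.1.val + 1 ≠ track y (extSeq ω) t))).card ≤ 2 * n := by
          refine le_trans (card_filter_fin_le _
            (({track x (extSeq ω) t, track y (extSeq ω) t} : Finset ℕ) ×ˢ Finset.Icc 1 n) ?_) ?_
          · intro c hc
            rw [Finset.mem_product, Finset.mem_insert, Finset.mem_singleton]
            constructor
            · by_contra hcon
              push_neg at hcon
              exact hc ⟨hcon.1, hcon.2⟩
            · exact Finset.mem_Icc.mpr ⟨by omega, Nat.succ_le_of_lt c.2.isLt⟩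
          · rw [Finset.card_product, Nat.card_Icc]
            have h2 : ({track x (extSeq ω) t, track y (extSeq ω) t} : Finset ℕ).card ≤ 2 :=
              Finset.card_insert_le _ _ |>.trans (by simp)
            have : n + 1 - 1 = n := by omega
            rw [this]
            exact Nat.mul_le_mul_right n h2
        have hcard : ((univ : Finset (Fin n × Fin n)) : Finset (Fin n × Fin n)).card = n * n := by
          simp [Finset.card_univ]
        have hprod : n * n = n * (n - 2) + 2 * n := by
          have h2 : n - 2 + 2 = n := by omega
          calc n * n = n * ((n - 2) + 2) := by rw [h2]
            _ = n * (n - 2) + 2 * n := by ring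
        omega
      calc (n * (n - 2)) ^ (t + 1) = (n * (n - 2)) ^ t * (n * (n - 2)) := by ring
        _ ≤ cntS n t x y * (n * (n - 2)) := Nat.mul_le_mul_right _ ih
        _ = ∑ ω ∈ (univ : Finset (Fin t → Fin n × Fin n)).filter
              (fun ω => Sv x y t (extSeq ω)), (n * (n - 2)) := by
            rw [Finset.sum_const, smul_eq_mul]; rfl
        _ ≤ ∑ ω ∈ (univ : Finset (Fin t → Fin n × Fin n)).filter
              (fun ω => Sv x y t (extSeq ω)),
              ((univ : Finset (Fin n × Fin n)).filter
                (fun c => Sv x y (t + 1) (extSeq (Fin.snoc ω c)))).card := by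
            refine Finset.sum_le_sum (fun ω hω => ?_)
            have hmul : n * (n - 2) = (n - 2) * n := by ring
            exact key ω (Finset.mem_filter.mp hω).2
        _ ≤ ∑ ω : Fin t → Fin n × Fin n,
              ((univ : Finset (Fin n × Fin n)).filter
                (fun c => Sv x y (t + 1) (extSeq (Fin.snoc ω c)))).card := by
            exact Finset.sum_le_sum_of_subset (Finset.filter_subset _ _)

/-- The ball `{1,…,n} ∩ [j-δ, j+δ]` as a finset. -/
def ballF (n j : ℕ) (δ : ℝ) : Finset ℕ :=
  (Finset.Icc 1 n).filter (fun p => |(p : ℝ) - (j : ℝ)| ≤ δ)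

lemma ballF_card (n j : ℕ) (δ : ℝ) (hδ : 0 ≤ δ) :
    ((ballF n j δ).card : ℝ) ≤ 2 * δ + 1 := by
  classical
  set d := ⌊δ⌋₊ with hd
  have hsub : ballF n j δ ⊆ Finset.Icc (j - d) (j + d) := by
    intro p hp
    rw [ballF, Finset.mem_filter, Finset.mem_Icc] at hp
    obtain ⟨⟨hp1, hp2⟩, habs⟩ := hp
    rw [abs_le] at habs
    rw [Finset.mem_Icc]
    constructor
    · rcases le_or_gt j p with h | h
      · omega
      · have : ((j - p : ℕ) : ℝ) ≤ δ := by
          push_cast [Nat.cast_sub h.le]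
          linarith [habs.1]
        have := Nat.le_floor this
        omega
    · rcases le_or_gt j p with h | h
      · have : ((p - j : ℕ) : ℝ) ≤ δ := by
          push_cast [Nat.cast_sub h]
          linarith [habs.2]
        have := Nat.le_floor this
        omega
      · omega
  have hcard : (ballF n j δ).card ≤ 2 * d + 1 := by
    refine le_trans (Finset.card_le_card hsub) ?_
    rw [Nat.card_Icc]
    omega
  calc ((ballF n j δ).card : ℝ) ≤ ((2 * d + 1 : ℕ) : ℝ) := by exact_mod_cast hcard
    _ = 2 * (d : ℝ) + 1 := by push_cast; ring
    _ ≤ 2 * δ + 1 := by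
        have := Nat.floor_le hδ
        linarith

/-- Numerator count for a fixed starting position `m` of the second thread. -/
def numC (n t m j : ℕ) (δ : ℝ) : ℕ :=
  ((Finset.univ : Finset (Fin t → Fin n × Fin n)).filter
    (fun ω => Sv 1 m t (extSeq ω) ∧ inBall n j δ (track m (extSeq ω) t))).card

lemma numC_le_sum (n t m j : ℕ) (δ : ℝ) :
    numC n t m j δ ≤ ∑ p ∈ ballF n j δ, cntE n t 1 m p := by
  classical
  unfold numC
  refine le_trans (Finset.card_le_card (?_ :
      _ ⊆ (ballF n j δ).biUnion (fun p =>
        (Finset.univ : Finset (Fin t → Fin n × Fin n)).filter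
          (fun ω => Sv 1 m t (extSeq ω) ∧ track m (extSeq ω) t = p)))) ?_
  · intro ω hω
    rw [Finset.mem_filter] at hω
    obtain ⟨-, hSv, hball⟩ := hω
    rw [Finset.mem_biUnion]
    refine ⟨track m (extSeq ω) t, ?_, ?_⟩
    · rw [ballF, Finset.mem_filter]
      exact ⟨hball.1, hball.2⟩
    · rw [Finset.mem_filter]
      exact ⟨Finset.mem_univ _, hSv, rfl⟩
  · refine le_trans (Finset.card_biUnion_le) ?_
    refine Finset.sum_le_sum (fun p _ => ?_)
    unfold cntE
    exact le_rfl

lemma numC_le_cntS (n t m j : ℕ) (δ : ℝ) : numC n t m j δ ≤ cntS n t 1 m := by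
  classical
  unfold numC cntS
  refine Finset.card_le_card (fun ω hω => ?_)
  rw [Finset.mem_filter] at hω ⊢
  exact ⟨hω.1, hω.2.1⟩

lemma card_eq_aux {α : Type*} [Fintype α] {p q : α → Prop} {i1 : DecidablePred p}
    {i2 : DecidablePred q} (h : ∀ a, p a ↔ q a) :
    (@Finset.filter _ p i1 Finset.univ).card = (@Finset.filter _ q i2 Finset.univ).card := by
  congr 1
  ext a
  simp only [Finset.mem_filter, Finset.mem_univ, true_and]
  exact h a

lemma prS_congr (n T : ℕ) (E E' : (ℕ → ℕ × ℕ) → Prop) (h : ∀ s, E s ↔ E' s) :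
    prS n T E = prS n T E' := by
  unfold prS
  exact congrArg (fun k : ℕ => (k : ℝ) / (n : ℝ) ^ (2 * T)) (card_eq_aux (fun ω => h _))

lemma prS_eq_cntS (n t m : ℕ) : prS n t (Sv 1 m t) = (cntS n t 1 m : ℝ) / (n : ℝ) ^ (2 * t) := by
  unfold prS cntS
  exact congrArg (fun k : ℕ => (k : ℝ) / (n : ℝ) ^ (2 * t)) (card_eq_aux (fun ω => Iff.rfl))

lemma prS_eq_numC (n t m j : ℕ) (δ : ℝ) :
    prS n t (fun s => Sv 1 m t s ∧ inBall n j δ (track m s t))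
      = (numC n t m j δ : ℝ) / (n : ℝ) ^ (2 * t) := by
  unfold prS numC
  exact congrArg (fun k : ℕ => (k : ℝ) / (n : ℝ) ^ (2 * t)) (card_eq_aux (fun ω => Iff.rfl))

lemma log_nat_nonneg (n : ℕ) : 0 ≤ Real.log n := by
  rcases n with _ | k
  · simp
  · exact Real.log_nonneg (by exact_mod_cast Nat.one_le_iff_ne_zero.mpr (Nat.succ_ne_zero k))

lemma Pm_le (n t ii jj m : ℕ) (hn : 3 ≤ n) (hij : ii ≠ jj) (hm2 : 2 ≤ m) (hm1 : m ≤ n - 1)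
    (δ : ℝ) :
    Pm n t ii jj 1 m (fun p => inBall n jj δ p.2)
      ≤ (numC n t m jj δ : ℝ) / (((n * (n - 2)) ^ t : ℕ) : ℝ)
    ∧ Pm n t ii jj 1 m (fun p => inBall n jj δ p.2) ≤ 1 := by
  classical
  have hσi : initPerm ii jj 1 m ii = 1 := by
    unfold initPerm
    rw [if_neg hij, if_pos rfl, if_neg (by omega : ¬ m ≤ 1)]
  have hσj : initPerm ii jj 1 m jj = m := by
    unfold initPerm
    rw [if_pos rfl]
  have hiffF : ∀ s, (inAFrom (initPerm ii jj 1 m) s t ii ∧ inAFrom (initPerm ii jj 1 m) s t jj)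
      ↔ Sv 1 m t s := by
    intro s
    constructor
    · rintro ⟨h1, h2⟩ l hl
      constructor
      · have := h1 l hl; rwa [posFrom_eq_track, hσi] at this
      · have := h2 l hl; rwa [posFrom_eq_track, hσj] at this
    · intro h
      constructor <;> intro l hl
      · rw [posFrom_eq_track, hσi]; exact (h l hl).1
      · rw [posFrom_eq_track, hσj]; exact (h l hl).2
  have hiffE : ∀ s, (inBall n jj δ (posFrom (initPerm ii jj 1 m) s t jj)
        ∧ (inAFrom (initPerm ii jj 1 m) s t ii ∧ inAFrom (initPerm ii jj 1 m) s t jj))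
      ↔ (Sv 1 m t s ∧ inBall n jj δ (track m s t)) := by
    intro s
    constructor
    · rintro ⟨hb, hF⟩
      refine ⟨(hiffF s).mp hF, ?_⟩
      rwa [posFrom_eq_track, hσj] at hb
    · rintro ⟨hF, hb⟩
      refine ⟨?_, (hiffF s).mpr hF⟩
      rwa [posFrom_eq_track, hσj]
  have h0 : Pm n t ii jj 1 m (fun p => inBall n jj δ p.2)
      = prS n t (fun s => inBall n jj δ (posFrom (initPerm ii jj 1 m) s t jj)
          ∧ (inAFrom (initPerm ii jj 1 m) s t ii ∧ inAFrom (initPerm ii jj 1 m) s t jj))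
        / prS n t (fun s => inAFrom (initPerm ii jj 1 m) s t ii
          ∧ inAFrom (initPerm ii jj 1 m) s t jj) := rfl
  rw [h0, prS_congr n t _ _ hiffE, prS_congr n t _ (Sv 1 m t) hiffF,
    prS_eq_numC n t m jj δ, prS_eq_cntS n t m]
  have hnZ : (0 : ℝ) < (n : ℝ) ^ (2 * t) := by
    have hn0 : (0:ℝ) < (n:ℝ) := by exact_mod_cast (by omega : 0 < n)
    positivity
  have hL : (0 : ℝ) < (((n * (n - 2)) ^ t : ℕ) : ℝ) := by
    have : 0 < (n * (n - 2)) ^ t := pow_pos (Nat.mul_pos (by omega) (by omega)) t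
    exact_mod_cast this
  have hDLn : (n * (n - 2)) ^ t ≤ cntS n t 1 m :=
    cntS_ge n hn le_rfl (show (1:ℕ) < m by omega) (show m ≤ n by omega) t
  have hDL : (((n * (n - 2)) ^ t : ℕ) : ℝ) ≤ (cntS n t 1 m : ℝ) := by exact_mod_cast hDLn
  have hDpos : (0 : ℝ) < (cntS n t 1 m : ℝ) := lt_of_lt_of_le hL hDL
  have e : ((numC n t m jj δ : ℝ) / (n : ℝ) ^ (2 * t))
      / ((cntS n t 1 m : ℝ) / (n : ℝ) ^ (2 * t))
      = (numC n t m jj δ : ℝ) / (cntS n t 1 m : ℝ) := by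
    rw [div_div_div_comm, div_self (ne_of_gt hnZ), div_one]
  rw [e]
  constructor
  · gcongr
  · rw [div_le_one hDpos]
    exact_mod_cast numC_le_cntS n t m jj δ

end PB
end PB

set_option maxHeartbeats 2000000 in
theorem P_sum_bound :
    ∃ g : ℕ → ℝ, (∀ n, 0 ≤ g n) ∧ g =O[atTop] (fun n : ℕ => (Real.log n) ^ 2) ∧
      ∀ n : ℕ, 3 ≤ n → ∀ i ∈ Finset.Icc 1 n, ∀ j ∈ Finset.Icc 1 n, i ≠ j →
        ∀ δ : ℝ, 0 ≤ δ → ∀ t : ℕ, (t : ℝ) ≤ (n : ℝ) * Real.log n →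
          ∑ m ∈ Finset.Icc 2 (n - 1), Pm n t i j 1 m (fun p => inBall n j δ p.2)
            ≤ 2 * δ + g n := by
  classical
  refine ⟨fun n => 1 + 16 * Real.log n, ?_, ?_, ?_⟩
  · intro n
    have := PB.log_nat_nonneg n
    show (0:ℝ) ≤ 1 + 16 * Real.log n
    linarith
  · rw [Asymptotics.isBigO_iff]
    refine ⟨17, ?_⟩
    filter_upwards [Filter.eventually_ge_atTop 3] with n hn
    have h3 : (3:ℝ) ≤ (n:ℝ) := by exact_mod_cast hn
    have hlog1 : 1 ≤ Real.log n := by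
      rw [Real.le_log_iff_exp_le (by linarith)]
      calc Real.exp 1 ≤ 2.7182818286 := le_of_lt Real.exp_one_lt_d9
        _ ≤ (n:ℝ) := by linarith
    have hnn : (0:ℝ) ≤ 1 + 16 * Real.log n := by linarith
    simp only [Real.norm_eq_abs]
    rw [abs_of_nonneg hnn, abs_of_nonneg (by positivity)]
    nlinarith [mul_le_mul_of_nonneg_right hlog1 (by linarith : (0:ℝ) ≤ Real.log n)]
  · intro n hn3 ii hii jj hjj hij δ hδ t ht
    have hN3 : (3:ℝ) ≤ (n:ℝ) := by exact_mod_cast hn3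
    by_cases hbig : ((n:ℝ) - 2)/2 ≤ δ
    · have hb : ∀ m ∈ Finset.Icc 2 (n-1),
          Pm n t ii jj 1 m (fun p => inBall n jj δ p.2) ≤ 1 := by
        intro m hm
        rw [Finset.mem_Icc] at hm
        exact (PB.Pm_le n t ii jj m hn3 hij hm.1 hm.2 δ).2
      have hlogn := PB.log_nat_nonneg n
      calc ∑ m ∈ Finset.Icc 2 (n-1), Pm n t ii jj 1 m (fun p => inBall n jj δ p.2)
          ≤ ∑ m ∈ Finset.Icc 2 (n-1), (1:ℝ) := Finset.sum_le_sum hb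
        _ = ((n - 2 : ℕ) : ℝ) := by
            rw [Finset.sum_const, Nat.card_Icc]
            have e : n - 1 + 1 - 2 = n - 2 := by omega
            rw [e, nsmul_eq_mul, mul_one]
        _ ≤ 2 * δ + (1 + 16 * Real.log n) := by
            have hc : ((n - 2 : ℕ) : ℝ) = (n:ℝ) - 2 := by
              rw [Nat.cast_sub (by omega)]; norm_num
            rw [hc]; linarith
    · push_neg at hbig
      have hPm : ∀ m ∈ Finset.Icc 2 (n-1),
          Pm n t ii jj 1 m (fun p => inBall n jj δ p.2)
            ≤ (PB.numC n t m jj δ : ℝ) / (((n*(n-2))^t : ℕ) : ℝ) := by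
        intro m hm
        rw [Finset.mem_Icc] at hm
        exact (PB.Pm_le n t ii jj m hn3 hij hm.1 hm.2 δ).1
      have hL : (0:ℝ) < (((n*(n-2))^t : ℕ) : ℝ) := by
        have : 0 < (n*(n-2))^t := pow_pos (Nat.mul_pos (by omega) (by omega)) t
        exact_mod_cast this
      have hNat : (∑ m ∈ Finset.Icc 2 (n-1), PB.numC n t m jj δ)
          ≤ (PB.ballF n jj δ).card * (n-1)^(2*t) := by
        calc ∑ m ∈ Finset.Icc 2 (n-1), PB.numC n t m jj δ
            ≤ ∑ m ∈ Finset.Icc 2 (n-1), ∑ p ∈ PB.ballF n jj δ, PB.cntE n t 1 m p :=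
              Finset.sum_le_sum (fun m _ => PB.numC_le_sum n t m jj δ)
          _ = ∑ p ∈ PB.ballF n jj δ, PB.Sc n t p := by
              rw [Finset.sum_comm]
              rfl
          _ ≤ ∑ p ∈ PB.ballF n jj δ, (n-1)^(2*t) :=
              Finset.sum_le_sum (fun p _ => PB.Sc_le n hn3 t p)
          _ = (PB.ballF n jj δ).card * (n-1)^(2*t) := by
              rw [Finset.sum_const, smul_eq_mul]
      have hchain : ∑ m ∈ Finset.Icc 2 (n-1), Pm n t ii jj 1 m (fun p => inBall n jj δ p.2)
          ≤ (((PB.ballF n jj δ).card * (n-1)^(2*t) : ℕ) : ℝ) / (((n*(n-2))^t : ℕ) : ℝ) := by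
        calc ∑ m ∈ Finset.Icc 2 (n-1), Pm n t ii jj 1 m (fun p => inBall n jj δ p.2)
            ≤ ∑ m ∈ Finset.Icc 2 (n-1), (PB.numC n t m jj δ : ℝ) / (((n*(n-2))^t : ℕ) : ℝ) :=
              Finset.sum_le_sum hPm
          _ = ((∑ m ∈ Finset.Icc 2 (n-1), PB.numC n t m jj δ : ℕ) : ℝ)
                / (((n*(n-2))^t : ℕ) : ℝ) := by
              rw [← Finset.sum_div, ← Nat.cast_sum]
          _ ≤ _ := by
              gcongr

      have hBle : ((PB.ballF n jj δ).card : ℝ) ≤ 2*δ + 1 := PB.ballF_card n jj δ hδ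
      have hB0 : (0:ℝ) ≤ ((PB.ballF n jj δ).card : ℝ) := Nat.cast_nonneg _
      have hcast : (((PB.ballF n jj δ).card * (n-1)^(2*t) : ℕ) : ℝ)
          = ((PB.ballF n jj δ).card : ℝ) * ((n:ℝ)-1)^(2*t) := by
        rw [Nat.cast_mul, Nat.cast_pow, Nat.cast_sub (by omega : 1 ≤ n)]
        norm_num
      have hcast2 : (((n*(n-2))^t : ℕ) : ℝ) = ((n:ℝ)*((n:ℝ)-2))^t := by
        rw [Nat.cast_pow, Nat.cast_mul, Nat.cast_sub (by omega : 2 ≤ n)]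
        norm_num
      rw [hcast, hcast2] at hchain
      have hden : (0:ℝ) < (n:ℝ)*((n:ℝ)-2) := by nlinarith
      have hQrw : ((PB.ballF n jj δ).card : ℝ) * ((n:ℝ)-1)^(2*t) / ((n:ℝ)*((n:ℝ)-2))^t
          = ((PB.ballF n jj δ).card : ℝ) * ((1 + 1/((n:ℝ)*((n:ℝ)-2)))^t) := by
        have h1 : ((n:ℝ)-1)^(2*t) = (((n:ℝ)-1)^2)^t := by rw [← pow_mul]
        have h2 : ((n:ℝ)-1)^2/((n:ℝ)*((n:ℝ)-2)) = 1 + 1/((n:ℝ)*((n:ℝ)-2)) := by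
          rw [add_div' _ _ _ (ne_of_gt hden), div_left_inj' (ne_of_gt hden)]
          ring
        rw [h1, mul_div_assoc, ← div_pow, h2]
      rw [hQrw] at hchain
      set x : ℝ := Real.log n / ((n:ℝ) - 2) with hxdef
      have hlogN : 0 ≤ Real.log n := PB.log_nat_nonneg n
      have hx0 : 0 ≤ x := div_nonneg hlogN (by linarith)
      have hx2 : x ≤ 2 := by
        rw [hxdef, div_le_iff₀ (by linarith : (0:ℝ) < (n:ℝ) - 2)]
        nlinarith [Real.log_le_sub_one_of_pos (show (0:ℝ) < (n:ℝ) by linarith)]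
      have hQ1 : (1 + 1/((n:ℝ)*((n:ℝ)-2)))^t ≤ Real.exp x := by
        have e1 : (1 + 1/((n:ℝ)*((n:ℝ)-2))) ≤ Real.exp (1/((n:ℝ)*((n:ℝ)-2))) := by
          have := Real.add_one_le_exp (1/((n:ℝ)*((n:ℝ)-2)))
          linarith
        have e2 : (1 + 1/((n:ℝ)*((n:ℝ)-2)))^t ≤ (Real.exp (1/((n:ℝ)*((n:ℝ)-2))))^t :=
          pow_le_pow_left₀ (by positivity) e1 t
        have e3 : (Real.exp (1/((n:ℝ)*((n:ℝ)-2))))^t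
            = Real.exp ((t:ℝ) * (1/((n:ℝ)*((n:ℝ)-2)))) := by
          rw [← Real.exp_nat_mul]
        have e4 : (t:ℝ) * (1/((n:ℝ)*((n:ℝ)-2))) ≤ x := by
          rw [hxdef, mul_one_div, div_le_div_iff₀ (by positivity) (by linarith : (0:ℝ) < (n:ℝ)-2)]
          nlinarith [ht, hlogN, hden]
        calc (1 + 1/((n:ℝ)*((n:ℝ)-2)))^t ≤ (Real.exp (1/((n:ℝ)*((n:ℝ)-2))))^t := e2
          _ = Real.exp ((t:ℝ) * (1/((n:ℝ)*((n:ℝ)-2)))) := e3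
          _ ≤ Real.exp x := Real.exp_le_exp.mpr e4
      have hexp8 : Real.exp x ≤ 1 + 8 * x := by
        have h1 : 1 - x ≤ Real.exp (-x) := by
          have := Real.add_one_le_exp (-x)
          linarith
        have h2 : (1 - x) * Real.exp x ≤ 1 := by
          rw [Real.exp_neg] at h1
          have := mul_le_mul_of_nonneg_right h1 (le_of_lt (Real.exp_pos x))
          rwa [inv_mul_cancel₀ (ne_of_gt (Real.exp_pos x))] at this
        have hex2 : Real.exp x ≤ 8 := by
          calc Real.exp x ≤ Real.exp 2 := Real.exp_le_exp.mpr hx2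
            _ = Real.exp 1 * Real.exp 1 := by rw [← Real.exp_add]; norm_num
            _ ≤ 2.7182818286 * 2.7182818286 := by
                have h9 := le_of_lt Real.exp_one_lt_d9
                exact mul_le_mul h9 h9 (le_of_lt (Real.exp_pos 1)) (by norm_num)
            _ ≤ 8 := by norm_num
        nlinarith [h2, mul_le_mul_of_nonneg_left hex2 hx0]
      have hfinal : ((PB.ballF n jj δ).card : ℝ) * (1 + 1/((n:ℝ)*((n:ℝ)-2)))^t
          ≤ (2*δ+1) * (1 + 8*x) := by
        have hQpos : (0:ℝ) ≤ (1 + 1/((n:ℝ)*((n:ℝ)-2)))^t := by positivity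
        exact mul_le_mul hBle (le_trans hQ1 hexp8) hQpos (by linarith)
      have hxlog : x ≤ Real.log n := by
        rw [hxdef]
        exact div_le_self hlogN (by linarith)
      have hxb : (2*δ+1) * (8*x) ≤ 16 * Real.log n := by
        have h2d : 2*δ + 1 ≤ (n:ℝ) - 1 := by linarith
        have hxN : x * ((n:ℝ) - 2) = Real.log n := by
          rw [hxdef]
          exact div_mul_cancel₀ _ (ne_of_gt (by linarith : (0:ℝ) < (n:ℝ)-2))
        have h8x : (0:ℝ) ≤ 8*x := mul_nonneg (by norm_num) hx0
        have hstep : (2*δ+1)*(8*x) ≤ ((n:ℝ)-1)*(8*x) :=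
          mul_le_mul_of_nonneg_right h2d h8x
        have hexpand : ((n:ℝ)-1)*(8*x) = 8*(x*((n:ℝ)-2)) + 8*x := by ring
        rw [hexpand, hxN] at hstep
        linarith
      calc ∑ m ∈ Finset.Icc 2 (n-1), Pm n t ii jj 1 m (fun p => inBall n jj δ p.2)
          ≤ ((PB.ballF n jj δ).card : ℝ) * (1 + 1/((n:ℝ)*((n:ℝ)-2)))^t := hchain
        _ ≤ (2*δ+1) * (1 + 8*x) := hfinal
        _ = 2*δ + 1 + (2*δ+1)*(8*x) := by ring
        _ ≤ 2*δ + (1 + 16*Real.log n) := by linarith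
end
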